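/- arXiv:1309.3815 — 5 statements merged into one kernel-verified Lean document; each statement's English description precedes it below -/
import Mathlib

section
/- Let X and Y be linear orders such that X is order-isomorphic to an initial segment (a downward-closed subset) of Y, and Y is order-isomorphic to a final segment (an upward-closed subset) of X. Then X and Y are order-isomorphic. -/
/-!
A Schröder–Bernstein argument that respects the order. For the embeddings `e : X ↪o Y` and
`f : Y ↪o X`, the operator `A ↦ (f '' (e '' A)ᶜ)ᶜ` preserves lower sets because `range e` is a
lower and `range f` an upper set, so Knaster–Tarski in the complete lattice of lower sets of `X`
gives a fixed point `A`. Then `X` is the ordered sum `A ⊕ₗ Aᶜ` and `Y` the ordered sum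
`e '' A ⊕ₗ (e '' A)ᶜ`; `e` maps the first summands onto each other and `f` maps `(e '' A)ᶜ` onto
`Aᶜ`.
-/

open Set

section

variable {X Y : Type*} [LinearOrder X] [LinearOrder Y]

def IsLowerSet.sumLexComplOrderIso {A : Set X} (hA : IsLowerSet A) [DecidablePred (· ∈ A)] :
    A ⊕ₗ ↥Aᶜ ≃o X where
  toEquiv := ofLex.trans (Equiv.Set.sumCompl A)
  map_rel_iff' {a b} := by
    induction a using Lex.rec with | _ a => ?_
    induction b using Lex.rec with | _ b => ?_
    rcases a with ⟨a, ha⟩ | ⟨a, ha⟩ <;> rcases b with ⟨b, hb⟩ | ⟨b, hb⟩ <;> simp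
    · exact (not_le.1 fun h => hb (hA h ha)).le
    · exact not_le.1 fun h => ha (hA h hb)

theorem nonempty_orderIso_of_isLowerSet {A : Set X} {B : Set Y} (hA : IsLowerSet A)
    (hB : IsLowerSet B) (e₁ : A ≃o B) (e₂ : ↥Aᶜ ≃o ↥Bᶜ) : Nonempty (X ≃o Y) := by
  classical
  exact ⟨hA.sumLexComplOrderIso.symm.trans ((OrderIso.sumLexCongr e₁ e₂).trans
    hB.sumLexComplOrderIso)⟩

theorem IsLowerSet.image_of_isLowerSet_range {A : Set X} (hA : IsLowerSet A) {e : X ↪o Y}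
    (he : IsLowerSet (range e)) : IsLowerSet (e '' A) := by
  rintro _ b hb ⟨a, ha, rfl⟩
  obtain ⟨c, rfl⟩ := he hb (mem_range_self a)
  exact mem_image_of_mem e (hA (e.le_iff_le.1 hb) ha)

theorem IsUpperSet.image_of_isUpperSet_range {A : Set X} (hA : IsUpperSet A) {e : X ↪o Y}
    (he : IsUpperSet (range e)) : IsUpperSet (e '' A) := by
  rintro _ b hb ⟨a, ha, rfl⟩
  obtain ⟨c, rfl⟩ := he hb (mem_range_self a)
  exact mem_image_of_mem e (hA (e.le_iff_le.1 hb) ha)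

namespace OrderEmbedding

def schroederBernsteinMap (e : X ↪o Y) (f : Y ↪o X) (he : IsLowerSet (range e))
    (hf : IsUpperSet (range f)) : LowerSet X →o LowerSet X where
  toFun A := ⟨(f '' (e '' A)ᶜ)ᶜ,
    ((A.lower.image_of_isLowerSet_range he).compl.image_of_isUpperSet_range hf).compl⟩
  monotone' _ _ h := compl_subset_compl.2 (image_mono (compl_subset_compl.2 (image_mono h)))

theorem exists_isLowerSet_compl_eq_image (e : X ↪o Y) (f : Y ↪o X) (he : IsLowerSet (range e))
    (hf : IsUpperSet (range f)) : ∃ A : Set X, IsLowerSet A ∧ Aᶜ = f '' (e '' A)ᶜ :=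
  ⟨(schroederBernsteinMap e f he hf).lfp, LowerSet.lower _,
    compl_eq_comm.1 (congrArg SetLike.coe (schroederBernsteinMap e f he hf).map_lfp)⟩

theorem nonempty_orderIso_of_isLowerSet_range (e : X ↪o Y) (f : Y ↪o X)
    (he : IsLowerSet (range e)) (hf : IsUpperSet (range f)) : Nonempty (X ≃o Y) := by
  obtain ⟨A, hA, hAc⟩ := exists_isLowerSet_compl_eq_image e f he hf
  exact nonempty_orderIso_of_isLowerSet hA (hA.image_of_isLowerSet_range he)
    (StrictMonoOn.orderIso e A (e.strictMono.strictMonoOn A))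
    ((StrictMonoOn.orderIso f _ (f.strictMono.strictMonoOn _)).trans
      (OrderIso.setCongr _ _ hAc.symm)).symm

end OrderEmbedding

end

/-- Lindenbaum's lemma: if `X` is order-isomorphic to an initial segment of `Y`
and `Y` is order-isomorphic to a final segment of `X`, then `X ≅ Y`. -/
theorem lindenbaum {X Y : Type*} [LinearOrder X] [LinearOrder Y]
    (S : Set Y) (hS : ∀ ⦃s y : Y⦄, s ∈ S → y ≤ s → y ∈ S)
    (T : Set X) (hT : ∀ ⦃t x : X⦄, t ∈ T → t ≤ x → x ∈ T)
    (e : X ≃o S) (f : Y ≃o T) : Nonempty (X ≃o Y) := by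
  let e' : X ↪o Y := e.toOrderEmbedding.trans (OrderEmbedding.subtype S)
  let f' : Y ↪o X := f.toOrderEmbedding.trans (OrderEmbedding.subtype T)
  have range_e : range e' = S := by
    change range (Subtype.val ∘ e) = S
    rw [range_comp, e.surjective.range_eq, image_univ, Subtype.range_coe]
  have range_f : range f' = T := by
    change range (Subtype.val ∘ f) = T
    rw [range_comp, f.surjective.range_eq, image_univ, Subtype.range_coe]
  refine OrderEmbedding.nonempty_orderIso_of_isLowerSet_range e' f' ?_ ?_
  · rw [range_e]; exact fun _ _ hle hs => hS hs hle
  · rw [range_f]; exact fun _ _ hle ht => hT ht hle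
end

section
/- Let κ be an ordinal and let (∼_β)_{β<κ} be a decreasing family of equivalence relations on ℕ, and define σ_n : κ → {0,1} as follows by transfinite recursion: σ_n(ξ) = 1 iff, letting m be the least natural with m < n and σ_m↾ξ = σ_n↾ξ, there exists β < ξ with ¬(n ∼_β m) (and σ_n(ξ) = 0 if no such m exists). Then each σ_n takes the value 1 at only finitely many ξ < κ; in fact σ_n(ξ) = 1 for at most n distinct values of ξ. -/
/-- With the sequences `σ_n` defined by the transfinite recursion from a decreasing
family of equivalence relations on `ℕ`, each `σ_n` takes the value `1` at only
finitely many ordinals `ξ < κ`; in fact at no more than `n` of them. -/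
theorem sigma_finite_support (κ : Ordinal) (sim : Ordinal → ℕ → ℕ → Prop)
    (hequiv : ∀ β < κ, Equivalence (sim β))
    (hdec : ∀ β α : Ordinal, β ≤ α → α < κ → ∀ n m : ℕ, sim α n m → sim β n m)
    (σ : ℕ → Ordinal → Bool)
    (hσ : ∀ n : ℕ, ∀ ξ < κ, (σ n ξ = true ↔ ∃ m < n,
        (∀ η < ξ, σ m η = σ n η) ∧
        (∀ m' < m, ¬ ∀ η < ξ, σ m' η = σ n η) ∧
        ∃ β < ξ, ¬ sim β n m)) :
    ∀ n : ℕ, {ξ : Ordinal | ξ < κ ∧ σ n ξ = true}.Finite ∧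
      {ξ : Ordinal | ξ < κ ∧ σ n ξ = true}.ncard ≤ n := by
  intro n
  set S := {ξ : Ordinal | ξ < κ ∧ σ n ξ = true} with hSdef
  have hw : ∀ ξ ∈ S, ∃ m, m < n ∧ (∀ η < ξ, σ m η = σ n η) ∧
      (∀ m' < m, ¬ ∀ η < ξ, σ m' η = σ n η) ∧ ∃ β < ξ, ¬ sim β n m := by
    intro ξ hξ
    obtain ⟨m, hm, h⟩ := (hσ n ξ hξ.1).mp hξ.2
    exact ⟨m, hm, h⟩
  choose! m hm1 hm2 hm3 _ using hw
  have mono : ∀ ξ ∈ S, ∀ ξ' ∈ S, ξ < ξ' → m ξ < m ξ' := by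
    intro ξ hξ ξ' hξ' hlt
    rcases lt_trichotomy (m ξ) (m ξ') with h | h | h
    · exact h
    · exfalso
      have h1 : σ (m ξ) ξ = true := by
        rw [h, hm2 ξ' hξ' ξ hlt]
        exact hξ.2
      obtain ⟨m₀, hm₀n, hm₀ag, -, -⟩ := (hσ (m ξ) ξ hξ.1).mp h1
      exact hm3 ξ hξ m₀ hm₀n (fun η hη => (hm₀ag η hη).trans (hm2 ξ hξ η hη))
    · exfalso
      exact hm3 ξ hξ (m ξ') h (fun η hη => hm2 ξ' hξ' η (lt_trans hη hlt))
  set f : S → Fin n := fun ξ => ⟨m ξ, hm1 ξ ξ.2⟩ with hf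
  have hinj : Function.Injective f := by
    intro ξ ξ' hne
    have hv : m (ξ : Ordinal) = m (ξ' : Ordinal) := congrArg Fin.val hne
    rcases lt_trichotomy (ξ : Ordinal) (ξ' : Ordinal) with h | h | h
    · exact absurd hv (Nat.ne_of_lt (mono ξ ξ.2 ξ' ξ'.2 h))
    · exact Subtype.ext h
    · exact absurd hv.symm (Nat.ne_of_lt (mono ξ' ξ'.2 ξ ξ.2 h))
  have hfin : S.Finite := Set.finite_coe_iff.mp (Finite.of_injective f hinj)
  refine ⟨hfin, ?_⟩
  have := Nat.card_le_card_of_injective f hinj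
  rwa [Nat.card_coe_set_eq, Nat.card_eq_fintype_card, Fintype.card_fin] at this
end

section
/- Define, for linear orders A and B and an ordinal ξ, the back-and-forth relation A ≤_ξ B by transfinite recursion: A ≤_0 B always holds, and A ≤_ξ B iff for every γ < ξ and every finite increasing tuple b₁ < ... < b_k in B there is a finite increasing tuple a₁ < ... < a_k in A such that, writing the induced decompositions A = A₀ + {a₁} + A₁ + ... + {a_k} + A_k and B = B₀ + {b₁} + B₁ + ... + {b_k} + B_k into intervals, B_i ≤_γ A_i for each 0 ≤ i ≤ k. Write A ≡_α B if A ≤_α B and B ≤_α A. Theorem: if C is a linear order and (A_i)_{i∈C}, (B_i)_{i∈C} are families of linear orders with A_i ≡_α B_i for every i ∈ C, then the lexicographic sums satisfy Σ_{i∈C} A_i ≡_α Σ_{i∈C} B_i. -/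
set_option linter.unusedSectionVars false
set_option maxHeartbeats 1000000

/-- The intervals of a linear order determined by a finite increasing tuple:
`interval b i` is the set of points lying strictly between `b (i-1)` and `b i`
(with the obvious conventions at the ends). -/
def interval {L : Type} [LinearOrder L] {k : ℕ} (b : Fin k → L) (i : Fin (k + 1)) : Set L :=
  {z | (∀ j : Fin k, (j : ℕ) < (i : ℕ) → b j < z) ∧ (∀ j : Fin k, (i : ℕ) ≤ (j : ℕ) → z < b j)}

/-- The interval-wise back-and-forth relation on linear orders, defined by transfinite
recursion: `bfLe 0 A B` always holds, and `bfLe ξ A B` iff for every `γ < ξ` and every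
finite increasing tuple in `B` there is a finite increasing tuple in `A` of the same
length such that the corresponding intervals `B_i`, `A_i` satisfy `bfLe γ B_i A_i`. -/
def bfLe (ξ : Ordinal) (A B : Type) [LinearOrder A] [LinearOrder B] : Prop :=
  ∀ γ < ξ, ∀ (k : ℕ) (b : Fin k → B), StrictMono b →
    ∃ a : Fin k → A, StrictMono a ∧
      ∀ i : Fin (k + 1), bfLe γ ↥(interval b i) ↥(interval a i)
termination_by ξ

theorem bfLe_iff (ξ : Ordinal) (A B : Type) [LinearOrder A] [LinearOrder B] :
    bfLe ξ A B ↔ ∀ γ < ξ, ∀ (k : ℕ) (b : Fin k → B), StrictMono b →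
    ∃ a : Fin k → A, StrictMono a ∧
      ∀ i : Fin (k + 1), bfLe γ ↥(interval b i) ↥(interval a i) := by
  rw [bfLe]

/-- Restrict an order isomorphism to subsets that correspond under it. -/
def OrderIso.restr {B B' : Type} [LinearOrder B] [LinearOrder B'] (f : B ≃o B')
    (s : Set B) (t : Set B') (h : ∀ z, z ∈ s ↔ f z ∈ t) : ↥s ≃o ↥t where
  toFun z := ⟨f z, (h z).1 z.2⟩
  invFun z := ⟨f.symm z, (h _).2 (by rw [f.apply_symm_apply]; exact z.2)⟩
  left_inv z := Subtype.ext (f.symm_apply_apply _)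
  right_inv z := Subtype.ext (f.apply_symm_apply _)
  map_rel_iff' {a b} := f.le_iff_le

theorem bfLe_congr : ∀ (ξ : Ordinal) (A A' B B' : Type) [LinearOrder A] [LinearOrder A']
    [LinearOrder B] [LinearOrder B'] (_ : A ≃o A') (_ : B ≃o B'), bfLe ξ A B → bfLe ξ A' B' := by
  intro ξ
  induction ξ using Ordinal.induction with
  | h ξ IH =>
    intro A A' B B' _ _ _ _ e f h
    rw [bfLe_iff] at h ⊢
    intro γ hγ k b' hb'
    obtain ⟨a, ha, hint⟩ := h γ hγ k (fun j => f.symm (b' j)) (f.symm.strictMono.comp hb')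
    refine ⟨fun j => e (a j), e.strictMono.comp ha, fun i => ?_⟩
    refine IH γ hγ _ _ _ _ (f.restr _ _ ?_) (e.restr _ _ ?_) (hint i)
    · intro z
      constructor
      · rintro ⟨h1, h2⟩
        refine ⟨fun j hj => ?_, fun j hj => ?_⟩
        · have := f.lt_iff_lt.2 (h1 j hj); rwa [f.apply_symm_apply] at this
        · have := f.lt_iff_lt.2 (h2 j hj); rwa [f.apply_symm_apply] at this
      · rintro ⟨h1, h2⟩
        refine ⟨fun j hj => ?_, fun j hj => ?_⟩
        · have := h1 j hj; rw [← f.apply_symm_apply (b' j)] at this; exact f.lt_iff_lt.1 this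
        · have := h2 j hj; rw [← f.apply_symm_apply (b' j)] at this; exact f.lt_iff_lt.1 this
    · intro z
      constructor
      · rintro ⟨h1, h2⟩
        exact ⟨fun j hj => e.lt_iff_lt.2 (h1 j hj), fun j hj => e.lt_iff_lt.2 (h2 j hj)⟩
      · rintro ⟨h1, h2⟩
        exact ⟨fun j hj => e.lt_iff_lt.1 (h1 j hj), fun j hj => e.lt_iff_lt.1 (h2 j hj)⟩

theorem bfLe_of_isEmpty : ∀ (ξ : Ordinal) (A B : Type) [LinearOrder A] [LinearOrder B],
    IsEmpty A → IsEmpty B → bfLe ξ A B := by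
  intro ξ
  induction ξ using Ordinal.induction with
  | h ξ IH =>
    intro A B _ _ hA hB
    rw [bfLe_iff]
    intro γ hγ k b hb
    match k with
    | 0 =>
      refine ⟨Fin.elim0, fun j => j.elim0, fun i => ?_⟩
      exact IH γ hγ _ _ (by infer_instance) (by infer_instance)
    | k + 1 => exact (hB.false (b 0)).elim

section LexHelpers
variable {C : Type} [LinearOrder C] {Z : C → Type} [∀ e, LinearOrder (Z e)]

theorem lex_lt_left {d d' : C} (u : Z d) (v : Z d') (h : d < d') :
    (toLex ⟨d, u⟩ : Σₗ e, Z e) < toLex ⟨d', v⟩ :=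
  Sigma.Lex.lt_def.2 (Or.inl h)

theorem lex_lt_same {d : C} {u v : Z d} (h : u < v) :
    (toLex ⟨d, u⟩ : Σₗ e, Z e) < toLex ⟨d, v⟩ :=
  Sigma.Lex.lt_def.2 (Or.inr ⟨rfl, h⟩)

theorem lex_lt_same_iff {d : C} {u v : Z d} :
    (toLex ⟨d, u⟩ : Σₗ e, Z e) < toLex ⟨d, v⟩ ↔ u < v := by
  constructor
  · intro h
    rcases Sigma.Lex.lt_def.1 h with h' | ⟨h', hh⟩
    · exact absurd h' (lt_irrefl d)
    · exact hh
  · exact lex_lt_same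

theorem lex_lt_elim {d d' : C} {u : Z d} {v : Z d'}
    (h : (toLex ⟨d, u⟩ : Σₗ e, Z e) < toLex ⟨d', v⟩) :
    d < d' ∨ ∃ h : d = d', h ▸ u < v := by
  rcases Sigma.Lex.lt_def.1 h with h' | ⟨h', hh⟩
  · exact Or.inl h'
  · have h'' : d = d' := h'
    subst h''
    exact Or.inr ⟨rfl, hh⟩

theorem lex_lt_fst_le {d d' : C} {u : Z d} {v : Z d'}
    (h : (toLex ⟨d, u⟩ : Σₗ e, Z e) < toLex ⟨d', v⟩) : d ≤ d' := by
  rcases lex_lt_elim h with h' | ⟨h', _⟩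
  · exact h'.le
  · exact h'.le

theorem lex_fst_mono {z z' : Σₗ e, Z e} (h : z < z') : (ofLex z).1 ≤ (ofLex z').1 := by
  rcases Sigma.Lex.lt_def.1 h with h' | ⟨h', _⟩
  · exact le_of_lt h'
  · exact le_of_eq h'

end LexHelpers

section Slice
variable {C : Type} [LinearOrder C] {Z : C → Type} [∀ e, LinearOrder (Z e)] {k : ℕ}

/-- The trace of the interval determined by a tuple in a lexicographic sum on the fiber `e`. -/
def fslice (t : Fin k → Σₗ e, Z e) (i : Fin (k + 1)) (e : C) : Set (Z e) :=
  {w | toLex ⟨e, w⟩ ∈ interval t i}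

/-- An interval in a lexicographic sum is order isomorphic to the lexicographic
sum of its fiber fslices. -/
noncomputable def fsliceIso (t : Fin k → Σₗ e, Z e) (i : Fin (k + 1)) :
    ↥(interval t i) ≃o Σₗ e, ↥(fslice t i e) := by
  refine StrictMono.orderIsoOfSurjective
    (fun z => toLex ⟨(ofLex z.1).1, ⟨(ofLex z.1).2, z.2⟩⟩) ?_ ?_
  · rintro ⟨⟨e, w⟩, hz⟩ ⟨⟨e', w'⟩, hz'⟩ hzz
    have h : (toLex ⟨e, w⟩ : Σₗ e, Z e) < toLex ⟨e', w'⟩ := hzz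
    rcases lex_lt_elim h with h' | ⟨h', hh⟩
    · exact lex_lt_left _ _ h'
    · subst h'
      exact lex_lt_same (Subtype.mk_lt_mk.2 hh)
  · rintro p
    exact ⟨⟨toLex ⟨(ofLex p).1, ((ofLex p).2 : ↥(fslice t i (ofLex p).1)).1⟩, (ofLex p).2.2⟩, rfl⟩

end Slice
section Counting

theorem filter_downclosed {n : ℕ} (Q : Fin n → Prop) [DecidablePred Q]
    (hQ : ∀ r r' : Fin n, r ≤ r' → Q r' → Q r) (r : Fin n) :
    Q r ↔ (r : ℕ) < (Finset.univ.filter Q).card := by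
  constructor
  · intro hr
    have hsub : Finset.Iic r ⊆ Finset.univ.filter Q := by
      intro r' hr'
      simp only [Finset.mem_Iic] at hr'
      simp only [Finset.mem_filter, Finset.mem_univ, true_and]
      exact hQ r' r hr' hr
    have := Finset.card_le_card hsub
    rw [Fin.card_Iic] at this
    omega
  · intro hr
    by_contra hQr
    have hsub : Finset.univ.filter Q ⊆ Finset.Iio r := by
      intro r' hr'
      simp only [Finset.mem_filter, Finset.mem_univ, true_and] at hr'
      simp only [Finset.mem_Iio]
      by_contra hge
      exact hQr (hQ r r' (le_of_not_gt hge) hr')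
    have := Finset.card_le_card hsub
    rw [Fin.card_Iio] at this
    omega

end Counting

section Asm
variable {C : Type} [LinearOrder C] {k : ℕ} (c : Fin k → C) {m : C → ℕ}
  (en : ∀ d, Fin (m d) ≃o {j : Fin k // c j = d})
  {Z : C → Type} [∀ e, LinearOrder (Z e)] (u : ∀ d, Fin (m d) → Z d)

/-- Assemble a tuple in a lexicographic sum from fiberwise tuples. -/
def asm : Fin k → Σₗ e, Z e := fun j => toLex ⟨c j, u (c j) ((en (c j)).symm ⟨j, rfl⟩)⟩

theorem asm_eq (j : Fin k) (d : C) (h : c j = d) :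
    asm c en u j = toLex ⟨d, u d ((en d).symm ⟨j, h⟩)⟩ := by subst h; rfl

theorem asm_strictMono (hc : Monotone c) (hu : ∀ d, StrictMono (u d)) :
    StrictMono (asm c en u) := by
  intro j j' hjj
  rcases lt_or_eq_of_le (hc hjj.le) with h | h
  · rw [asm_eq c en u j (c j) rfl, asm_eq c en u j' (c j') rfl]
    exact lex_lt_left _ _ h
  · rw [asm_eq c en u j (c j) rfl, asm_eq c en u j' (c j) h.symm]
    exact lex_lt_same (hu _ ((en (c j)).symm.strictMono (Subtype.mk_lt_mk.2 hjj)))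

/-- The number of tuple entries in the fiber `d` lying globally below the cut `i`. -/
def cutn (i : Fin (k + 1)) (d : C) : ℕ :=
  (Finset.univ.filter fun j : Fin k => c j = d ∧ (j : ℕ) < (i : ℕ)).card

include en in
theorem cutn_le (i : Fin (k + 1)) (d : C) : cutn c i d ≤ m d := by
  have hm : m d = (Finset.univ.filter fun j : Fin k => c j = d).card := by
    have h1 : Fintype.card (Fin (m d)) = Fintype.card {j : Fin k // c j = d} :=
      Fintype.card_congr (en d).toEquiv
    rw [Fintype.card_fin] at h1
    rw [h1, Fintype.card_subtype]
  rw [hm, cutn]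
  apply Finset.card_le_card
  intro j hj
  simp only [Finset.mem_filter, Finset.mem_univ, true_and] at hj ⊢
  exact hj.1

theorem lt_cutn_iff (i : Fin (k + 1)) (d : C) (r : Fin (m d)) :
    (r : ℕ) < cutn c i d ↔ (((en d r : {j : Fin k // c j = d}) : Fin k) : ℕ) < (i : ℕ) := by
  classical
  set Q : Fin (m d) → Prop := fun r => (((en d r : {j : Fin k // c j = d}) : Fin k) : ℕ) < (i : ℕ)
    with hQdef
  have hdc : ∀ r r' : Fin (m d), r ≤ r' → Q r' → Q r := by
    intro r r' hrr hq
    have h1 : en d r ≤ en d r' := (en d).monotone hrr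
    have h2 : ((en d r : {j : Fin k // c j = d}) : Fin k) ≤ ((en d r' : {j : Fin k // c j = d}) : Fin k) :=
      Subtype.coe_le_coe.2 h1
    have h3 : (((en d r : {j : Fin k // c j = d}) : Fin k) : ℕ) ≤ (((en d r' : {j : Fin k // c j = d}) : Fin k) : ℕ) := h2
    simp only [hQdef] at hq ⊢
    omega
  have hcard : (Finset.univ.filter Q).card = cutn c i d := by
    rw [cutn]
    apply Finset.card_bij (fun (r : Fin (m d)) (_ : r ∈ Finset.univ.filter Q) =>
      ((en d r : {j : Fin k // c j = d}) : Fin k))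
    · intro r hr
      simp only [Finset.mem_filter, Finset.mem_univ, true_and, hQdef] at hr ⊢
      exact ⟨(en d r).2, hr⟩
    · intro r hr r' hr' hval
      have : en d r = en d r' := Subtype.ext hval
      exact (en d).injective this
    · intro j hj
      simp only [Finset.mem_filter, Finset.mem_univ, true_and] at hj
      refine ⟨(en d).symm ⟨j, hj.1⟩, ?_, ?_⟩
      · simp only [Finset.mem_filter, Finset.mem_univ, true_and, hQdef,
          OrderIso.apply_symm_apply]
        exact hj.2
      · simp only [OrderIso.apply_symm_apply]
  rw [← hcard]
  exact (filter_downclosed Q hdc r).symm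

/-- The compatibility condition for a fiber `d` and a cut position `i`:
all tuple entries in fibers below `d` lie below the cut, and all entries in
fibers above `d` lie above the cut. -/
def okP (i : Fin (k + 1)) (d : C) : Prop :=
  (∀ j : Fin k, c j < d → (j : ℕ) < (i : ℕ)) ∧ (∀ j : Fin k, d < c j → (i : ℕ) ≤ (j : ℕ))

theorem fslice_asm_eq (i : Fin (k + 1)) (d : C) (hok : okP c i d) :
    fslice (asm c en u) i d
      = interval (u d) ⟨cutn c i d, Nat.lt_succ_of_le (cutn_le c en i d)⟩ := by
  ext w
  simp only [fslice, interval, Set.mem_setOf_eq]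
  constructor
  · rintro ⟨h1, h2⟩
    constructor
    · intro r hr
      have hgl := (lt_cutn_iff c en i d r).1 hr
      have hj := (en d r).2
      have hb := h1 ((en d r : {j : Fin k // c j = d}) : Fin k) hgl
      rw [asm_eq c en u _ d hj] at hb
      have hsy : (en d).symm ⟨((en d r : {j : Fin k // c j = d}) : Fin k), hj⟩ = r := by
        rw [show (⟨((en d r : {j : Fin k // c j = d}) : Fin k), hj⟩ : {j : Fin k // c j = d})
          = en d r from Subtype.ext rfl]
        exact (en d).symm_apply_apply r
      rw [hsy] at hb
      exact lex_lt_same_iff.1 hb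
    · intro r hr
      have hgl : (i : ℕ) ≤ (((en d r : {j : Fin k // c j = d}) : Fin k) : ℕ) := by
        have := (lt_cutn_iff c en i d r).2
        omega
      have hj := (en d r).2
      have hb := h2 ((en d r : {j : Fin k // c j = d}) : Fin k) hgl
      rw [asm_eq c en u _ d hj] at hb
      have hsy : (en d).symm ⟨((en d r : {j : Fin k // c j = d}) : Fin k), hj⟩ = r := by
        rw [show (⟨((en d r : {j : Fin k // c j = d}) : Fin k), hj⟩ : {j : Fin k // c j = d})
          = en d r from Subtype.ext rfl]
        exact (en d).symm_apply_apply r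
      rw [hsy] at hb
      exact lex_lt_same_iff.1 hb
  · rintro ⟨g1, g2⟩
    constructor
    · intro j hj
      rcases lt_trichotomy (c j) d with h | h | h
      · rw [asm_eq c en u j (c j) rfl]
        exact lex_lt_left _ _ h
      · rw [asm_eq c en u j d h]
        refine lex_lt_same (g1 _ ?_)
        refine (lt_cutn_iff c en i d ((en d).symm ⟨j, h⟩)).2 ?_
        rw [OrderIso.apply_symm_apply]
        exact hj
      · exact absurd hj (not_lt.2 (hok.2 j h))
    · intro j hj
      rcases lt_trichotomy (c j) d with h | h | h
      · exact absurd hj (not_le.2 (hok.1 j h))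
      · rw [asm_eq c en u j d h]
        refine lex_lt_same (g2 _ ?_)
        show cutn c i d ≤ (((en d).symm ⟨j, h⟩ : Fin (m d)) : ℕ)
        by_contra hcon
        push_neg at hcon
        have h2 := (lt_cutn_iff c en i d ((en d).symm ⟨j, h⟩)).1 hcon
        rw [OrderIso.apply_symm_apply] at h2
        have h3 : ((⟨j, h⟩ : {j : Fin k // c j = d}) : Fin k) = j := rfl
        rw [h3] at h2
        omega
      · rw [asm_eq c en u j (c j) rfl]
        exact lex_lt_left _ _ h

theorem fslice_asm_empty (i : Fin (k + 1)) (d : C) (hok : ¬ okP c i d) :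
    IsEmpty ↥(fslice (asm c en u) i d) := by
  rw [isEmpty_subtype]
  intro w hw
  rw [okP] at hok
  rcases not_and_or.1 hok with h | h
  · push_neg at h
    obtain ⟨j, hj1, hj2⟩ := h
    have hb := hw.2 j (by omega)
    rw [asm_eq c en u j (c j) rfl] at hb
    exact absurd (lex_lt_fst_le hb) (not_le.2 hj1)
  · push_neg at h
    obtain ⟨j, hj1, hj2⟩ := h
    have hb := hw.1 j (by omega)
    rw [asm_eq c en u j (c j) rfl] at hb
    exact absurd (lex_lt_fst_le hb) (not_le.2 hj1)

end Asm

section Extract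
variable {C : Type} [LinearOrder C] {Z : C → Type} [∀ e, LinearOrder (Z e)] {k : ℕ}

/-- First coordinates of a tuple in a lexicographic sum. -/
def fstOf (b : Fin k → Σₗ e, Z e) : Fin k → C := fun j => (ofLex (b j)).1

/-- Number of entries of the tuple lying in the fiber `d`. -/
def fibCard (b : Fin k → Σₗ e, Z e) (d : C) : ℕ :=
  Fintype.card {j : Fin k // fstOf b j = d}

/-- Enumeration of the entries of the tuple lying in the fiber `d`. -/
noncomputable def fibEn (b : Fin k → Σₗ e, Z e) (d : C) :
    Fin (fibCard b d) ≃o {j : Fin k // fstOf b j = d} :=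
  monoEquivOfFin _ rfl

/-- Second coordinate of a tuple entry, as an element of its fiber. -/
def fibVal (b : Fin k → Σₗ e, Z e) (j : Fin k) (d : C) (h : fstOf b j = d) : Z d :=
  h ▸ (ofLex (b j)).2

theorem fibVal_spec (b : Fin k → Σₗ e, Z e) (j : Fin k) (d : C) (h : fstOf b j = d) :
    b j = toLex ⟨d, fibVal b j d h⟩ := by subst h; rfl

/-- The induced tuple in the fiber `d`. -/
noncomputable def fibTup (b : Fin k → Σₗ e, Z e) (d : C) : Fin (fibCard b d) → Z d :=
  fun r => fibVal b ((fibEn b d r : {j : Fin k // fstOf b j = d}) : Fin k) d (fibEn b d r).2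

theorem fstOf_monotone {b : Fin k → Σₗ e, Z e} (hb : StrictMono b) : Monotone (fstOf b) := by
  intro j j' hjj
  rcases eq_or_lt_of_le hjj with h | h
  · subst h; exact le_rfl
  · exact lex_fst_mono (hb h)

theorem fibTup_strictMono {b : Fin k → Σₗ e, Z e} (hb : StrictMono b) (d : C) :
    StrictMono (fibTup b d) := by
  intro r r' hrr
  have h1 : ((fibEn b d r : {j : Fin k // fstOf b j = d}) : Fin k)
      < ((fibEn b d r' : {j : Fin k // fstOf b j = d}) : Fin k) :=
    Subtype.coe_lt_coe.2 ((fibEn b d).strictMono hrr)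
  have h2 := hb h1
  rw [fibVal_spec b _ d (fibEn b d r).2, fibVal_spec b _ d (fibEn b d r').2] at h2
  exact lex_lt_same_iff.1 h2

theorem b_eq_asm (b : Fin k → Σₗ e, Z e) : b = asm (fstOf b) (fibEn b) (fibTup b) := by
  funext j
  rw [asm_eq (fstOf b) (fibEn b) (fibTup b) j (fstOf b j) rfl]
  set s := (fibEn b (fstOf b j)).symm ⟨j, rfl⟩ with hs
  have h1 : fibEn b (fstOf b j) s = ⟨j, rfl⟩ := (fibEn b _).apply_symm_apply _
  have h2 : fibTup b (fstOf b j) s = fibVal b j (fstOf b j) rfl :=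
    congrArg (fun x : {j' : Fin k // fstOf b j' = fstOf b j} => fibVal b x.1 (fstOf b j) x.2) h1
  rw [h2]
  exact fibVal_spec b j (fstOf b j) rfl

end Extract

/-- Lexicographic sums of `bfLe`-related families are `bfLe`-related. -/
theorem bfLe_sum : ∀ (ξ : Ordinal) (C : Type) [LinearOrder C] (X Y : C → Type)
    [∀ e, LinearOrder (X e)] [∀ e, LinearOrder (Y e)],
    (∀ e, bfLe ξ (X e) (Y e)) → bfLe ξ (Σₗ e, X e) (Σₗ e, Y e) := by
  intro ξ
  induction ξ using Ordinal.induction with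
  | h ξ IH =>
    intro C _ X Y _ _ H
    rw [bfLe_iff]
    intro γ hγ k b hb
    have hmono := fstOf_monotone hb
    have Hx : ∀ d, ∃ x : Fin (fibCard b d) → X d, StrictMono x ∧
        ∀ r : Fin (fibCard b d + 1), bfLe γ ↥(interval (fibTup b d) r) ↥(interval x r) :=
      fun d => (bfLe_iff ξ (X d) (Y d)).1 (H d) γ hγ (fibCard b d) (fibTup b d)
        (fibTup_strictMono hb d)
    choose xt hxmono hxint using Hx
    refine ⟨asm (fstOf b) (fibEn b) xt, asm_strictMono _ _ _ hmono hxmono, fun i => ?_⟩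
    have hba := b_eq_asm b
    have hfib : ∀ e, bfLe γ ↥(fslice b i e) ↥(fslice (asm (fstOf b) (fibEn b) xt) i e) := by
      intro e
      by_cases hok : okP (fstOf b) i e
      · have h1 : fslice b i e = interval (fibTup b e)
            ⟨cutn (fstOf b) i e, Nat.lt_succ_of_le (cutn_le (fstOf b) (fibEn b) i e)⟩ := by
          calc fslice b i e = fslice (asm (fstOf b) (fibEn b) (fibTup b)) i e := by rw [← hba]
          _ = _ := fslice_asm_eq (fstOf b) (fibEn b) (fibTup b) i e hok
        have h2 : fslice (asm (fstOf b) (fibEn b) xt) i e = interval (xt e)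
            ⟨cutn (fstOf b) i e, Nat.lt_succ_of_le (cutn_le (fstOf b) (fibEn b) i e)⟩ :=
          fslice_asm_eq (fstOf b) (fibEn b) xt i e hok
        rw [h1, h2]
        exact hxint e _
      · have e1 : IsEmpty ↥(fslice b i e) := by
          rw [show fslice b i e = fslice (asm (fstOf b) (fibEn b) (fibTup b)) i e from
            by rw [← hba]]
          exact fslice_asm_empty (fstOf b) (fibEn b) (fibTup b) i e hok
        have e2 := fslice_asm_empty (fstOf b) (fibEn b) xt i e hok
        exact bfLe_of_isEmpty γ _ _ e1 e2
    have hIH := IH γ hγ C (fun e => ↥(fslice b i e))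
      (fun e => ↥(fslice (asm (fstOf b) (fibEn b) xt) i e)) hfib
    exact bfLe_congr γ _ _ _ _ (fsliceIso b i).symm
      (fsliceIso (asm (fstOf b) (fibEn b) xt) i).symm hIH

/-- If `A_i ≡_α B_i` (in the interval-wise back-and-forth sense) for all `i` in a
linear order `C`, then the lexicographic sums satisfy `Σ_{i∈C} A_i ≡_α Σ_{i∈C} B_i`. -/
theorem lex_sum_bf_equiv {C : Type} [LinearOrder C] (A B : C → Type)
    [∀ i, LinearOrder (A i)] [∀ i, LinearOrder (B i)] (α : Ordinal)
    (h : ∀ i, bfLe α (A i) (B i) ∧ bfLe α (B i) (A i)) :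
    bfLe α (Σₗ i, A i) (Σₗ i, B i) ∧ bfLe α (Σₗ i, B i) (Σₗ i, A i) :=
  ⟨bfLe_sum α C A B (fun i => (h i).1), bfLe_sum α C B A (fun i => (h i).2)⟩
end

section
/- Let A and B be linear orders and let 'A + 1 + B' denote the linear order consisting of A, followed by one new point c, followed by B. Using the interval-wise back-and-forth relations ≤_ξ on linear orders, prove: for every ordinal ξ, (A + 1 + B) ≤_ξ (A' + 1 + B') if and only if A ≤_ξ A' and B ≤_ξ B', where the distinguished middle points are matched. -/
/-- The standard back-and-forth relation between tuples in linear orders, defined by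
transfinite recursion: `bfT 0` holds iff the tuples satisfy the same atomic formulas;
`bfT ξ L M a b` iff the tuples satisfy the same atomic formulas and for every `γ < ξ`
and every tuple `d` in `M` there is a tuple `c` in `L` with `bfT γ M L (b ++ d) (a ++ c)`. -/
def bfT (ξ : Ordinal) (L : Type) [LinearOrder L] (M : Type) [LinearOrder M]
    {k : ℕ} (a : Fin k → L) (b : Fin k → M) : Prop :=
  (∀ i j, a i ≤ a j ↔ b i ≤ b j) ∧
  ∀ γ < ξ, ∀ (l : ℕ) (d : Fin l → M), ∃ c : Fin l → L,
    bfT γ M L (Fin.append b d) (Fin.append a c)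
termination_by ξ

/-!
Both directions reduce to a statement about arbitrary tuples `a`, `b` of the same order type:
`bfT ξ a b` holds iff `bfLe ξ` relates corresponding cells of `a` and `b`, the convex pieces cut
out by sign patterns. Forward, the points supplied by `bfT` for an increasing tuple inside a cell
turn its intervals into cells of the extended tuples. Backward, the new points are sorted cell by
cell of `b` and matched inside each cell by `bfLe`; each cell of the extended tuple is then either
empty on both sides or a cell of the matched tuples inside one cell of `b` and `a`. For the
one-point tuples the two cells are `A` and `B`.
-/

variable {ι X Y : Type} [LinearOrder X] [LinearOrder Y]

def cell {k : ℕ} (x : Fin k → X) (p : Fin k → Bool) : Set X :=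
  {z | (∀ j, p j = false → x j < z) ∧ ∀ j, p j = true → z < x j}

def SameOrderType (x : ι → X) (y : ι → Y) : Prop :=
  ∀ i j, x i ≤ x j ↔ y i ≤ y j

def PatternConsistent {n : ℕ} (x : Fin n → X) (q : Fin n → Bool) : Prop :=
  ∀ r s, q r = false → q s = true → x r < x s

section Cell

variable {k m : ℕ} {x : Fin k → X} {p : Fin k → Bool} {z : X}

theorem interval_eq_cell (x : Fin k → X) (i : Fin (k + 1)) :
    interval x i = cell x (fun j => decide ((i : ℕ) ≤ j)) := by
  ext z
  simp [interval, cell]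

theorem notMem_cell_iff :
    z ∉ cell x p ↔ ∃ j, (p j = true ∧ x j ≤ z) ∨ (p j = false ∧ z ≤ x j) := by
  simp only [cell, Set.mem_ofPred_eq, not_and_or, not_forall, not_lt, exists_prop]
  constructor
  · rintro (⟨j, hj, h⟩ | ⟨j, hj, h⟩)
    exacts [⟨j, .inr ⟨hj, h⟩⟩, ⟨j, .inl ⟨hj, h⟩⟩]
  · rintro ⟨j, ⟨hj, h⟩ | ⟨hj, h⟩⟩
    exacts [.inr ⟨j, hj, h⟩, .inl ⟨j, hj, h⟩]

theorem apply_notMem_cell (j : Fin k) : x j ∉ cell x p :=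
  notMem_cell_iff.2 ⟨j, by cases p j <;> simp⟩

theorem cell_subset_cell_comp (τ : Fin m → Fin k) : cell x p ⊆ cell (x ∘ τ) (p ∘ τ) :=
  fun _ hz => ⟨fun t => hz.1 (τ t), fun t => hz.2 (τ t)⟩

theorem cell_eq_empty_of_not_patternConsistent (h : ¬ PatternConsistent x p) : cell x p = ∅ := by
  refine Set.eq_empty_of_forall_notMem fun z hz => h fun r s hr hs => ?_
  exact (hz.1 r hr).trans (hz.2 s hs)

theorem cell_comp_eq_of_patternConsistent (hp : PatternConsistent x p) {τ : Fin m → Fin k}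
    (hτ : ∀ r, x r ∉ cell (x ∘ τ) (p ∘ τ)) : cell (x ∘ τ) (p ∘ τ) = cell x p := by
  refine Set.Subset.antisymm (fun z hz => ?_) (cell_subset_cell_comp τ)
  refine ⟨fun r hr => ?_, fun r hr => ?_⟩ <;>
  obtain ⟨t, ⟨ht, hle⟩ | ⟨ht, hle⟩⟩ := notMem_cell_iff.1 (hτ r)
  · exact absurd hle (hp _ _ hr ht).not_ge
  · exact hle.trans_lt (hz.1 t ht)
  · exact (hz.2 t ht).trans_le hle
  · exact absurd hle (hp _ _ ht hr).not_ge

theorem cell_eq_empty_of_descent {e : Fin m → X} (he : Monotone e) {r : Fin m → Bool}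
    {t t' : Fin m} (htt' : t ≤ t') (ht : r t = true) (ht' : r t' = false) : cell e r = ∅ :=
  Set.eq_empty_of_forall_notMem fun _ hz =>
    ((hz.1 t' ht').trans (hz.2 t ht)).not_ge (he htt')

end Cell

theorem Fin.comp_append {α β : Type} {m n : ℕ} (g : α → β) (u : Fin m → α) (v : Fin n → α) :
    g ∘ Fin.append u v = Fin.append (g ∘ u) (g ∘ v) := by
  funext r
  refine Fin.addCases (fun i => ?_) (fun j => ?_) r <;> simp

theorem Fin.append_comp_castAdd {α : Type} {m n : ℕ} (u : Fin m → α) (v : Fin n → α) :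
    Fin.append u v ∘ Fin.castAdd n = u := by
  funext i
  simp

theorem Fin.append_comp_natAdd {α : Type} {m n : ℕ} (u : Fin m → α) (v : Fin n → α) :
    Fin.append u v ∘ Fin.natAdd m = v := by
  funext j
  simp

theorem Fin.append_comp_append_castAdd_natAdd {α : Type} {k l m : ℕ} (u : Fin k → α)
    (v : Fin l → α) (σ : Fin m → Fin l) :
    Fin.append u v ∘ Fin.append (Fin.castAdd l) (Fin.natAdd k ∘ σ) = Fin.append u (v ∘ σ) := by
  rw [Fin.comp_append, Fin.append_comp_castAdd, ← Function.comp_assoc, Fin.append_comp_natAdd]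

namespace SameOrderType

variable {x : ι → X} {y : ι → Y}

theorem symm (h : SameOrderType x y) : SameOrderType y x :=
  fun i j => (h i j).symm

theorem comp {κ : Type} (h : SameOrderType x y) (σ : κ → ι) : SameOrderType (x ∘ σ) (y ∘ σ) :=
  fun i j => h (σ i) (σ j)

theorem lt_iff (h : SameOrderType x y) (i j : ι) : x i < x j ↔ y i < y j := by
  simp only [← not_le, h j i]

theorem eq_iff (h : SameOrderType x y) (i j : ι) : x i = x j ↔ y i = y j := by
  simp only [le_antisymm_iff, h i j, h j i]

theorem of_lt_imp (h₁ : ∀ i j, x i < x j → y i < y j) (h₂ : ∀ i j, y i < y j → x i < x j) :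
    SameOrderType x y :=
  fun i j => by simpa only [← not_lt] using ⟨mt (h₂ j i), mt (h₁ j i)⟩

theorem patternConsistent_iff {n : ℕ} {x : Fin n → X} {y : Fin n → Y} (h : SameOrderType x y)
    (q : Fin n → Bool) : PatternConsistent x q ↔ PatternConsistent y q := by
  simp only [PatternConsistent, h.lt_iff]

theorem apply_mem_cell_comp_iff {m : ℕ} (h : SameOrderType x y) (τ : Fin m → ι)
    (p : Fin m → Bool) (r : ι) : x r ∈ cell (x ∘ τ) p ↔ y r ∈ cell (y ∘ τ) p := by
  simp only [cell, Set.mem_ofPred_eq, Function.comp, h.lt_iff]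

end SameOrderType

theorem exists_eq_threshold_or_descent {m : ℕ} (r : Fin m → Bool) :
    (∃ i : Fin (m + 1), r = fun t : Fin m => decide ((i : ℕ) ≤ t)) ∨
      ∃ t t', t ≤ t' ∧ r t = true ∧ r t' = false := by
  by_cases hr : Monotone r
  · classical
    left
    set s := Finset.univ.filter (fun t => r t = false)
    refine ⟨⟨s.card, Nat.lt_succ_of_le (card_finset_fin_le s)⟩, funext fun t => ?_⟩
    cases ht : r t
    · have : Finset.Iic t ⊆ s := fun t' ht' => by
        simpa [s] using Bool.eq_false_of_le_false (ht ▸ hr (Finset.mem_Iic.1 ht'))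
      have := Finset.card_le_card this
      simp only [Fin.card_Iic] at this
      simp only [false_eq_decide_iff, not_le, gt_iff_lt]
      omega
    · have : s ⊆ Finset.Iio t := fun t' ht' => by
        simp only [s, Finset.mem_filter, Finset.mem_univ, true_and] at ht'
        exact Finset.mem_Iio.2 (lt_of_not_ge fun h => absurd (ht' ▸ ht ▸ hr h) (by decide))
      have := Finset.card_le_card this
      simp only [Fin.card_Iio] at this
      simpa using this
  · right
    simp only [Monotone, not_forall] at hr
    obtain ⟨t, t', htt', h⟩ := hr
    exact ⟨t, t', htt', by cases ht : r t <;> cases ht' : r t' <;> simp_all⟩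

def OrderIso.subsetCongr (e : X ≃o Y) {s : Set X} {t : Set Y} (h : ∀ z, z ∈ s ↔ e z ∈ t) :
    s ≃o t where
  toEquiv := e.toEquiv.subtypeEquiv h
  map_rel_iff' := e.le_iff_le

def OrderIso.intervalCongr (e : X ≃o Y) {k : ℕ} {x : Fin k → X} {y : Fin k → Y}
    (h : ∀ j, e (x j) = y j) (i : Fin (k + 1)) : interval x i ≃o interval y i :=
  e.subsetCongr fun z => by simp only [interval, Set.mem_ofPred_eq, ← h, e.lt_iff_lt]

def subtypeSubtypeOrderIso {s : Set X} (t : Set s) :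
    t ≃o {z | ∃ h : z ∈ s, (⟨z, h⟩ : s) ∈ t} where
  toEquiv := Equiv.subtypeSubtypeEquivSubtypeExists _ _
  map_rel_iff' := Iff.rfl

theorem bfLe_of_orderIso {X' Y' : Type} [LinearOrder X'] [LinearOrder Y'] (ξ : Ordinal)
    (eX : X ≃o X') (eY : Y ≃o Y') (h : bfLe ξ X Y) : bfLe ξ X' Y' := by
  induction ξ using WellFoundedLT.induction generalizing X X' Y Y' with
  | _ ξ IH =>
  rw [bfLe] at h ⊢
  intro γ hγ k y hy
  obtain ⟨x, hx, hxy⟩ := h γ hγ k (eY.symm ∘ y) (eY.symm.strictMono.comp hy)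
  refine ⟨eX ∘ x, eX.strictMono.comp hx, fun i => IH γ hγ ?_ ?_ (hxy i)⟩
  · exact eY.intervalCongr (fun j => eY.apply_symm_apply (y j)) i
  · exact eX.intervalCongr (fun _ => rfl) i

theorem bfLe_congr_s9 {X' Y' : Type} [LinearOrder X'] [LinearOrder Y'] (ξ : Ordinal)
    (eX : X ≃o X') (eY : Y ≃o Y') : bfLe ξ X Y ↔ bfLe ξ X' Y' :=
  ⟨bfLe_of_orderIso ξ eX eY, bfLe_of_orderIso ξ eX.symm eY.symm⟩

theorem bfLe_of_isEmpty_s9 (ξ : Ordinal) [IsEmpty X] [IsEmpty Y] : bfLe ξ X Y := by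
  induction ξ using WellFoundedLT.induction generalizing X Y with
  | _ ξ IH =>
  rw [bfLe]
  intro γ hγ k y _
  cases k with
  | zero => exact ⟨Fin.elim0, fun i => i.elim0, fun _ => IH γ hγ⟩
  | succ k => exact isEmptyElim (y 0)

theorem bfLe_of_eq_empty (ξ : Ordinal) {s : Set X} {t : Set Y} (hs : s = ∅) (ht : t = ∅) :
    bfLe ξ s t := by
  subst hs ht
  exact bfLe_of_isEmpty_s9 ξ

section CellAppend

variable {k m : ℕ} {x : Fin k → X} {p : Fin k → Bool}

theorem cell_append (w : Fin m → X) (r : Fin m → Bool) :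
    cell (Fin.append x w) (Fin.append p r) = cell x p ∩ cell w r := by
  ext z
  simp only [cell, Set.mem_inter_iff, Set.mem_ofPred_eq, Fin.forall_fin_add, Fin.append_left,
    Fin.append_right]
  tauto

def cellSubtypeIso (E : Fin m → cell x p) (r : Fin m → Bool) :
    cell E r ≃o cell (Fin.append x (Subtype.val ∘ E)) (Fin.append p r) :=
  (subtypeSubtypeOrderIso _).trans <| OrderIso.setCongr _ _ <| by
    rw [cell_append]
    ext z
    exact ⟨fun ⟨h, hE⟩ => ⟨h, hE⟩, fun ⟨h, hE⟩ => ⟨h, hE⟩⟩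

end CellAppend

section Pattern

variable {k : ℕ} {x : Fin k → X} {p p' : Fin k → Bool} {u u' : X}

theorem eq_true_of_mem_cell_of_lt (hu : u ∈ cell x p) {j : Fin k} (h : u < x j) : p j = true :=
  Bool.not_eq_false _ ▸ fun hj => (hu.1 j hj).not_gt h

theorem eq_false_of_mem_cell_of_gt (hu : u ∈ cell x p) {j : Fin k} (h : x j < u) :
    p j = false :=
  Bool.not_eq_true _ ▸ fun hj => (hu.2 j hj).not_gt h

theorem exists_eq_true_eq_false_of_lt (hu : u ∈ cell x p) (hu' : u' ∈ cell x p') (h : u < u')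
    (hne : p ≠ p') : ∃ j, p j = true ∧ p' j = false := by
  obtain ⟨j, hj⟩ := Function.ne_iff.1 hne
  cases hpj : p j
  · have hp'j : p' j = true := by simpa [hpj] using hj.symm
    exact absurd ((hu.1 j hpj).trans (h.trans (hu'.2 j hp'j))) (lt_irrefl _)
  · exact ⟨j, hpj, by simpa [hpj] using hj.symm⟩

theorem mem_cell_decide_lt (h : ∀ j, x j ≠ u) : u ∈ cell x fun j => decide (u < x j) := by
  refine ⟨fun j hj => ?_, fun j hj => of_decide_eq_true hj⟩
  exact lt_of_le_of_ne (not_lt.1 (of_decide_eq_false hj)) (h j)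

end Pattern

theorem exists_strictMono_comp_range_eq_inter {l : ℕ} (d : Fin l → X) (s : Set X) :
    ∃ (m : ℕ) (σ : Fin m → Fin l), StrictMono (d ∘ σ) ∧ Set.range (d ∘ σ) = Set.range d ∩ s := by
  classical
  set S := (Finset.univ.image d).filter (· ∈ s)
  have hσ : ∀ t, ∃ j, d j = S.orderEmbOfFin rfl t := fun t => by
    have := S.orderEmbOfFin_mem rfl t
    simp only [S, Finset.mem_filter, Finset.mem_image, Finset.mem_univ, true_and] at this
    exact this.1
  choose σ hσ using hσ
  have hdσ : d ∘ σ = S.orderEmbOfFin rfl := funext hσ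
  refine ⟨S.card, σ, hdσ ▸ (S.orderEmbOfFin rfl).strictMono, ?_⟩
  rw [hdσ, Finset.range_orderEmbOfFin]
  ext z
  simp [S]

section Amalgam

variable {k : ℕ} {m : (Fin k → Bool) → ℕ} {x : Fin k → X} {y : Fin k → Y}
  {e : ∀ p, Fin (m p) → X} {f : ∀ p, Fin (m p) → Y}

theorem lt_imp_sumElim_lt (hxy : ∀ i j, x i < x j → y i < y j) (he : ∀ p, StrictMono (e p))
    (hf : ∀ p, StrictMono (f p)) (hemem : ∀ p t, e p t ∈ cell x p)
    (hfmem : ∀ p t, f p t ∈ cell y p) (s s' : Fin k ⊕ Σ p, Fin (m p))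
    (h : Sum.elim x (fun s => e s.1 s.2) s < Sum.elim x (fun s => e s.1 s.2) s') :
    Sum.elim y (fun s => f s.1 s.2) s < Sum.elim y (fun s => f s.1 s.2) s' := by
  rcases s with j | ⟨p, t⟩ <;> rcases s' with j' | ⟨p', t'⟩
  · exact hxy j j' h
  · exact (hfmem p' t').1 j (eq_false_of_mem_cell_of_gt (hemem p' t') h)
  · exact (hfmem p t).2 j' (eq_true_of_mem_cell_of_lt (hemem p t) h)
  · by_cases hp : p = p'
    · subst hp
      exact hf p ((he p).lt_iff_lt.1 h)
    · obtain ⟨j, hj, hj'⟩ := exists_eq_true_eq_false_of_lt (hemem p t) (hemem p' t') h hp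
      exact ((hfmem p t).2 j hj).trans ((hfmem p' t').1 j hj')

theorem SameOrderType.sumElim (hxy : SameOrderType x y) (he : ∀ p, StrictMono (e p))
    (hf : ∀ p, StrictMono (f p)) (hemem : ∀ p t, e p t ∈ cell x p)
    (hfmem : ∀ p t, f p t ∈ cell y p) :
    SameOrderType (Sum.elim x fun s : Σ p, Fin (m p) => e s.1 s.2)
      (Sum.elim y fun s : Σ p, Fin (m p) => f s.1 s.2) :=
  .of_lt_imp (lt_imp_sumElim_lt (fun i j => (hxy.lt_iff i j).1) he hf hemem hfmem)
    (lt_imp_sumElim_lt (fun i j => (hxy.lt_iff i j).2) hf he hfmem hemem)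

theorem exists_sumElim_eq {l : ℕ} {d : Fin l → X} {σ : ∀ p, Fin (m p) → Fin l}
    (hσ : ∀ p, Set.range (d ∘ σ p) = Set.range d ∩ cell x p) (j : Fin l) :
    ∃ s, Sum.elim x (fun s : Σ p, Fin (m p) => d (σ s.1 s.2)) s = d j := by
  by_cases hj : ∃ j₀, x j₀ = d j
  · obtain ⟨j₀, hj₀⟩ := hj
    exact ⟨.inl j₀, hj₀⟩
  · obtain ⟨t, ht⟩ : d j ∈ Set.range (d ∘ σ _) := by
      rw [hσ]
      exact ⟨Set.mem_range_self j, mem_cell_decide_lt (not_exists.1 hj)⟩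
    exact ⟨.inr ⟨_, t⟩, ht⟩

end Amalgam

theorem bfLe_cell_append_of_bfLe_interval {γ : Ordinal} {k l m : ℕ} {x : Fin k → X} {y : Fin l → X}
    {x' : Fin k → Y} {y' : Fin l → Y} (hsame : SameOrderType (Fin.append x y) (Fin.append x' y'))
    (q : Fin (k + l) → Bool) {σ : Fin m → Fin l}
    {E : Fin m → cell x (q ∘ Fin.castAdd l)} {E' : Fin m → cell x' (q ∘ Fin.castAdd l)}
    (hE : Subtype.val ∘ E = y ∘ σ) (hE' : Subtype.val ∘ E' = y' ∘ σ)
    (hEmono : StrictMono E) (hE'mono : StrictMono E')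
    (hcover : ∀ j, y j ∈ cell x (q ∘ Fin.castAdd l) → ∃ t, y (σ t) = y j)
    (hint : ∀ i, bfLe γ (interval E i) (interval E' i)) :
    bfLe γ (cell (Fin.append x y) q) (cell (Fin.append x' y') q) := by
  by_cases hcons : PatternConsistent (Fin.append x y) q
  swap
  · exact bfLe_of_eq_empty γ (cell_eq_empty_of_not_patternConsistent hcons)
      (cell_eq_empty_of_not_patternConsistent ((hsame.patternConsistent_iff q).not.1 hcons))
  -- For a consistent pattern, points of `y` outside the cell of `x` and repeated points impose
  -- no new constraint, so only the subtuple `x ++ y ∘ σ` matters.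
  set τ : Fin (k + m) → Fin (k + l) := Fin.append (Fin.castAdd l) (Fin.natAdd k ∘ σ)
  have hτ : Fin.append x y ∘ τ = Fin.append x (Subtype.val ∘ E) := by
    rw [Fin.append_comp_append_castAdd_natAdd, hE]
  have hτ' : Fin.append x' y' ∘ τ = Fin.append x' (Subtype.val ∘ E') := by
    rw [Fin.append_comp_append_castAdd_natAdd, hE']
  have hqτ : q ∘ τ = Fin.append (q ∘ Fin.castAdd l) (q ∘ Fin.natAdd k ∘ σ) := Fin.comp_append _ _ _
  have hcov : ∀ r, Fin.append x y r ∉ cell (Fin.append x y ∘ τ) (q ∘ τ) := by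
    rw [hτ, hqτ, cell_append]
    intro r
    refine Fin.addCases (fun j₀ => ?_) (fun j => ?_) r
    · simpa using fun h _ => apply_notMem_cell j₀ h
    · rw [Fin.append_right]
      intro ⟨hy, hyE⟩
      obtain ⟨t, ht⟩ := hcover j hy
      rw [← ht, ← Function.comp_apply (f := y), ← hE] at hyE
      exact apply_notMem_cell t hyE
  have hcov' r := (hsame.apply_mem_cell_comp_iff τ (q ∘ τ) r).not.1 (hcov r)
  rw [← cell_comp_eq_of_patternConsistent hcons hcov,
    ← cell_comp_eq_of_patternConsistent ((hsame.patternConsistent_iff q).1 hcons) hcov',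
    hτ, hτ', hqτ]
  refine bfLe_of_orderIso γ (cellSubtypeIso E _) (cellSubtypeIso E' _) ?_
  rcases exists_eq_threshold_or_descent (q ∘ Fin.natAdd k ∘ σ) with
    ⟨i, hi⟩ | ⟨t, t', htt', ht, ht'⟩
  · rw [hi, ← interval_eq_cell, ← interval_eq_cell]
    exact hint i
  · exact bfLe_of_eq_empty γ (cell_eq_empty_of_descent hEmono.monotone htt' ht ht')
      (cell_eq_empty_of_descent hE'mono.monotone htt' ht ht')

section Equivalence

variable {L M : Type} [LinearOrder L] [LinearOrder M] {ξ : Ordinal} {k : ℕ}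
  {a : Fin k → L} {b : Fin k → M}

theorem bfLe_cell_of_bfT
    (IH : ∀ γ < ξ, ∀ {L M : Type} [LinearOrder L] [LinearOrder M] {n : ℕ} (a : Fin n → L)
      (b : Fin n → M), bfT γ L M a b → ∀ p, bfLe γ (cell a p) (cell b p))
    (h : bfT ξ L M a b) (p : Fin k → Bool) : bfLe ξ (cell a p) (cell b p) := by
  rw [bfT] at h
  rw [bfLe]
  intro γ hγ l d hd
  obtain ⟨c, hc⟩ := h.2 γ hγ l (Subtype.val ∘ d)
  have hsame : SameOrderType (Fin.append b (Subtype.val ∘ d)) (Fin.append a c) := by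
    rw [bfT] at hc
    exact hc.1
  have hcmem (j : Fin l) : c j ∈ cell a p := by
    have := hsame.apply_mem_cell_comp_iff (Fin.castAdd l) p (Fin.natAdd k j)
    simpa only [Fin.append_comp_castAdd, Fin.append_right, Function.comp_apply, (d j).2,
      true_iff] using this
  refine ⟨fun j => ⟨c j, hcmem j⟩, fun j j' hjj' => ?_, fun i => ?_⟩
  · simpa using (hsame.lt_iff (Fin.natAdd k j) (Fin.natAdd k j')).1 (by simpa using hd hjj')
  · rw [interval_eq_cell, interval_eq_cell]
    exact bfLe_of_orderIso γ (cellSubtypeIso _ _).symm (cellSubtypeIso _ _).symm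
      (IH γ hγ _ _ hc (Fin.append p fun t => decide ((i : ℕ) ≤ t)))

theorem bfT_of_bfLe_cell
    (IH : ∀ γ < ξ, ∀ {L M : Type} [LinearOrder L] [LinearOrder M] {n : ℕ} (a : Fin n → L)
      (b : Fin n → M), SameOrderType a b → (∀ p, bfLe γ (cell a p) (cell b p)) → bfT γ L M a b)
    (hab : SameOrderType a b) (h : ∀ p, bfLe ξ (cell a p) (cell b p)) : bfT ξ L M a b := by
  rw [bfT]
  refine ⟨hab, fun γ hγ l d => ?_⟩
  choose m σ hσmono hσrange using fun p => exists_strictMono_comp_range_eq_inter d (cell b p)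
  have hσmem (p) (t) : d (σ p t) ∈ cell b p :=
    (Set.ext_iff.1 (hσrange p) _).1 (Set.mem_range_self t) |>.2
  have hext (p) : ∃ F : Fin (m p) → cell a p, StrictMono F ∧
      ∀ i, bfLe γ (interval (fun t => (⟨d (σ p t), hσmem p t⟩ : cell b p)) i) (interval F i) := by
    have := h p
    rw [bfLe] at this
    exact this γ hγ _ _ fun t t' htt' => hσmono p htt'
  choose F hFmono hFint using hext
  set w := Sum.elim b fun s : Σ p, Fin (m p) => d (σ s.1 s.2)
  set w' := Sum.elim a fun s : Σ p, Fin (m p) => (F s.1 s.2 : L)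
  have hw : SameOrderType w w' :=
    hab.symm.sumElim hσmono (fun p => Subtype.strictMono_coe _ |>.comp (hFmono p)) hσmem
      fun p t => (F p t).2
  -- Each `d j` is sent to `a j₀` if `d j = b j₀`, and otherwise to the partner of `d j`
  -- inside the cell of `b` containing it.
  choose src hsrc using exists_sumElim_eq hσrange
  have hd : Fin.append b d = w ∘ Fin.append Sum.inl src := by
    rw [Fin.comp_append]
    exact congrArg _ (funext hsrc).symm
  have hsame : SameOrderType (Fin.append b d) (Fin.append a (w' ∘ src)) := by
    rw [hd, show Fin.append a (w' ∘ src) = w' ∘ Fin.append Sum.inl src by rw [Fin.comp_append]; rfl]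
    exact hw.comp _
  have hF (p) : Subtype.val ∘ F p = (w' ∘ src) ∘ σ p := funext fun t =>
    ((hw.eq_iff (.inr ⟨p, t⟩) (src (σ p t))).1 (hsrc (σ p t)).symm)
  have hcover (p) (j) (hj : d j ∈ cell b p) : ∃ t, d (σ p t) = d j := by
    rw [← Set.mem_range, ← Function.comp_def, hσrange]
    exact ⟨Set.mem_range_self j, hj⟩
  exact ⟨w' ∘ src, IH γ hγ _ _ hsame fun q =>
    bfLe_cell_append_of_bfLe_interval hsame q rfl (hF _) (hσmono _) (hFmono _) (hcover _) (hFint _)⟩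

end Equivalence

theorem bfT_iff_forall_bfLe_cell (ξ : Ordinal) {L M : Type} [LinearOrder L] [LinearOrder M]
    {k : ℕ} (a : Fin k → L) (b : Fin k → M) (hab : SameOrderType a b) :
    bfT ξ L M a b ↔ ∀ p, bfLe ξ (cell a p) (cell b p) := by
  induction ξ using WellFoundedLT.induction generalizing L M k with
  | _ ξ IH =>
  exact ⟨bfLe_cell_of_bfT (fun γ hγ _ _ _ _ _ a b h =>
      (IH γ hγ a b (by rw [bfT] at h; exact h.1)).1 h),
    bfT_of_bfLe_cell (fun γ hγ _ _ _ _ _ a b hab => (IH γ hγ a b hab).2) hab⟩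

section LexSum

variable (A B : Type) [LinearOrder A] [LinearOrder B]

noncomputable def orderIsoIioMid :
    A ≃o Set.Iio (toLex (Sum.inr (toLex (Sum.inl ()))) : A ⊕ₗ Unit ⊕ₗ B) :=
  StrictMono.orderIsoOfSurjective (fun z => ⟨toLex (Sum.inl z), by simp⟩)
    (fun z z' h => by simpa using h) <| by
      rintro ⟨z | (u | z), hz⟩
      · exact ⟨z, rfl⟩
      · exact absurd (Sum.Lex.inl_lt_inl_iff.1 (Sum.Lex.inr_lt_inr_iff.1 hz)) (lt_irrefl _)
      · exact absurd (Sum.Lex.inr_lt_inr_iff.1 hz) Sum.Lex.not_inr_lt_inl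

noncomputable def orderIsoIoiMid :
    B ≃o Set.Ioi (toLex (Sum.inr (toLex (Sum.inl ()))) : A ⊕ₗ Unit ⊕ₗ B) :=
  StrictMono.orderIsoOfSurjective (fun z => ⟨toLex (Sum.inr (toLex (Sum.inr z))), by simp⟩)
    (fun z z' h => by simpa using h) <| by
      rintro ⟨z | (u | z), hz⟩
      · exact absurd hz Sum.Lex.not_inr_lt_inl
      · exact absurd (Sum.Lex.inl_lt_inl_iff.1 (Sum.Lex.inr_lt_inr_iff.1 hz)) (lt_irrefl _)
      · exact ⟨z, rfl⟩

end LexSum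

theorem cell_single_cons_true (z : X) (v : Fin 0 → Bool) :
    cell ![z] (Fin.cons true v) = Set.Iio z := by
  ext
  simp [cell, Fin.forall_fin_one]

theorem cell_single_cons_false (z : X) (v : Fin 0 → Bool) :
    cell ![z] (Fin.cons false v) = Set.Ioi z := by
  ext
  simp [cell, Fin.forall_fin_one]

/-- Decomposition property for sums with a distinguished separating point:
`(A + 1 + B) ≤_ξ (A' + 1 + B')` with the two middle points matched (expressed via the
back-and-forth relation on the tuples consisting of the middle points) holds if and
only if `A ≤_ξ A'` and `B ≤_ξ B'` (interval-wise back-and-forth relations). -/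
theorem sum_one_bf_iff (A A' B B' : Type)
    [LinearOrder A] [LinearOrder A'] [LinearOrder B] [LinearOrder B'] :
    ∀ ξ : Ordinal,
      bfT ξ (A ⊕ₗ Unit ⊕ₗ B) (A' ⊕ₗ Unit ⊕ₗ B')
          ![toLex (Sum.inr (toLex (Sum.inl ())))] ![toLex (Sum.inr (toLex (Sum.inl ())))] ↔
        (bfLe ξ A A' ∧ bfLe ξ B B') := by
  intro ξ
  rw [bfT_iff_forall_bfLe_cell ξ _ _ fun i j => by simp [Subsingleton.elim i j]]
  simp only [Fin.forall_fin_succ_pi, Fin.forall_fin_zero_pi, Bool.forall_bool]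
  rw [cell_single_cons_true, cell_single_cons_true, cell_single_cons_false,
    cell_single_cons_false, and_comm, bfLe_congr_s9 ξ (orderIsoIioMid A B) (orderIsoIioMid A' B'),
    bfLe_congr_s9 ξ (orderIsoIoiMid A B) (orderIsoIoiMid A' B')]
end

section
/- Define the Scott rank of a countable linear order L as follows: for a finite increasing tuple ā in L, let r_L(ā) be the least ordinal α such that every tuple b̄ in L with (L, ā) ≤_α (L, b̄) is in the same automorphism orbit as ā; and let SR(L) be the least ordinal strictly greater than r_L(ā) for all finite tuples ā. Theorem: for linear orders A and B, max{SR(A), SR(B)} ≤ SR(A + 1 + B) ≤ max{SR(A), SR(B)} + 3. -/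
/-- `rk L a` is the least ordinal `α` such that every tuple `b` with
`(L, a) ≤_α (L, b)` is automorphic to `a`. -/
noncomputable def rk (L : Type) [LinearOrder L] {k : ℕ} (a : Fin k → L) : Ordinal :=
  sInf {α | ∀ b : Fin k → L, bfT α L L a b → ∃ f : L ≃o L, ∀ i, f (a i) = b i}

/-- The Scott rank of a linear order: the least ordinal strictly greater than
`rk L a` for every finite tuple `a` in `L`. -/
noncomputable def scottRank (L : Type) [LinearOrder L] : Ordinal :=
  sInf {α | ∀ (k : ℕ) (a : Fin k → L), rk L a < α}

/-!
For a point `c` of a linear order `L`, write `L = L_{<c} + {c} + L_{>c}`.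

Lower bound: `(L_{<c}, a) ≤_β (L_{<c}, b)` lifts to `(L, a c) ≤_β (L, b c)`, and an automorphism
of `L` fixing `c` restricts to `L_{<c}`; hence `r_{L_{<c}}(a) ≤ r_L(a c) < SR(L)`.

Upper bound: for countable `M`, `(M, a) ≤_{SR(M)+1} (N, b)` already gives an isomorphism taking
`a` to `b`, since the relations `(M, u) ≤_{r_M(u)} (N, v)` form a back-and-forth system. Given
`(L, t) ≤_{μ+2} (L, s)` with `μ = max(SR A, SR B)`, answer the challenge `c` by some `d`; the two
sides of `c` are then `≤_{μ+1}`-related to the two sides of `d`, hence isomorphic compatibly with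
`s` and `t`, and these isomorphisms glue to an automorphism of `L` taking `s` to `t`.
-/

section

universe u

variable {L M : Type} [LinearOrder L] [LinearOrder M] {k l : ℕ} {α γ : Ordinal}

theorem bfT_iff {a : Fin k → L} {b : Fin k → M} :
    bfT α L M a b ↔ (∀ i j, a i ≤ a j ↔ b i ≤ b j) ∧
      ∀ γ < α, ∀ (l : ℕ) (d : Fin l → M), ∃ c : Fin l → L,
        bfT γ M L (Fin.append b d) (Fin.append a c) := by
  rw [bfT]

theorem cmp_eq_cmp_of_le_iff {x y : L} {x' y' : M} (h₁ : x ≤ y ↔ x' ≤ y')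
    (h₂ : y ≤ x ↔ y' ≤ x') : cmp x y = cmp x' y' := by
  rcases lt_trichotomy x y with h | rfl | h
  · rw [h.cmp_eq_lt, eq_comm, cmp_eq_lt_iff, lt_iff_le_not_ge, ← h₁, ← h₂]
    exact ⟨h.le, h.not_ge⟩
  · rw [cmp_self_eq_eq, eq_comm, cmp_eq_eq_iff]
    exact le_antisymm (h₁.1 le_rfl) (h₂.1 le_rfl)
  · rw [h.cmp_eq_gt, eq_comm, cmp_eq_gt_iff, lt_iff_le_not_ge, ← h₁, ← h₂]
    exact ⟨h.le, h.not_ge⟩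

theorem cmp_eq_cmp_of_cmp_ne {x y c : L} {x' y' d : M} (hx : cmp x c = cmp x' d)
    (hy : cmp y c = cmp y' d) (hne : cmp x c ≠ cmp y c) : cmp x y = cmp x' y' := by
  rcases h₁ : cmp x c <;> rcases h₂ : cmp y c <;> rw [h₁, h₂] at hne <;> rw [h₁] at hx <;>
    rw [h₂] at hy <;> simp only [eq_comm (a := Ordering.lt), eq_comm (a := Ordering.eq),
      eq_comm (a := Ordering.gt), cmp_eq_lt_iff, cmp_eq_eq_iff, cmp_eq_gt_iff] at hx hy h₁ h₂ <;>
    first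
    | exact absurd rfl hne
    | (refine ((cmp_eq_lt_iff _ _).2 ?_).trans ((cmp_eq_lt_iff _ _).2 ?_).symm <;> order)
    | (refine ((cmp_eq_gt_iff _ _).2 ?_).trans ((cmp_eq_gt_iff _ _).2 ?_).symm <;> order)

theorem Fin.comp_append_s10 {X Y : Type} (f : X → Y) (u : Fin k → X) (v : Fin l → X) :
    f ∘ Fin.append u v = Fin.append (f ∘ u) (f ∘ v) := by
  funext i
  refine Fin.addCases (fun i => ?_) (fun i => ?_) i <;> simp

namespace bfT

variable {a : Fin k → L} {b : Fin k → M}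

theorem cmp_eq (h : bfT α L M a b) (i j : Fin k) : cmp (a i) (a j) = cmp (b i) (b j) :=
  cmp_eq_cmp_of_le_iff ((bfT_iff.1 h).1 i j) ((bfT_iff.1 h).1 j i)

theorem exists_append (h : bfT α L M a b) (hγ : γ < α) (d : Fin l → M) :
    ∃ c : Fin l → L, bfT γ M L (Fin.append b d) (Fin.append a c) :=
  (bfT_iff.1 h).2 γ hγ l d

theorem exists_snoc (h : bfT α L M a b) (hγ : γ < α) (y : M) :
    ∃ x : L, bfT γ M L (Fin.snoc b y) (Fin.snoc a x) := by
  obtain ⟨c, hc⟩ := h.exists_append hγ fun _ : Fin 1 => y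
  rw [Fin.append_right_eq_snoc, Fin.append_right_eq_snoc] at hc
  exact ⟨c 0, hc⟩

theorem mono (h : bfT α L M a b) (hγ : γ ≤ α) : bfT γ L M a b :=
  bfT_iff.2 ⟨(bfT_iff.1 h).1, fun _ hδ _ => h.exists_append (hδ.trans_le hγ)⟩

theorem comp : ∀ {α : Ordinal} {L M : Type} [LinearOrder L] [LinearOrder M] {k j : ℕ}
    {a : Fin k → L} {b : Fin k → M}, bfT α L M a b → ∀ σ : Fin j → Fin k,
    bfT α L M (a ∘ σ) (b ∘ σ) := by
  intro α
  induction α using WellFoundedLT.induction with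
  | _ α IH =>
    intro L M _ _ k j a b h σ
    have hσ : ∀ {X : Type} {l : ℕ} (u : Fin k → X) (v : Fin l → X),
        Fin.append u v ∘ Fin.append (Fin.castAdd l ∘ σ) (Fin.natAdd k) =
          Fin.append (u ∘ σ) v := by
      intro X l u v
      funext i
      refine Fin.addCases (fun i => ?_) (fun i => ?_) i <;> simp
    refine bfT_iff.2 ⟨fun i j => (bfT_iff.1 h).1 (σ i) (σ j), fun γ hγ l d => ?_⟩
    obtain ⟨c, hc⟩ := h.exists_append hγ d
    exact ⟨c, hσ b d ▸ hσ a c ▸ IH γ hγ hc _⟩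

theorem trans : ∀ {α : Ordinal} {L M N : Type} [LinearOrder L] [LinearOrder M] [LinearOrder N]
    {k : ℕ} {a : Fin k → L} {b : Fin k → M} {c : Fin k → N},
    bfT α L M a b → bfT α M N b c → bfT α L N a c := by
  intro α
  induction α using WellFoundedLT.induction with
  | _ α IH =>
    intro L M N _ _ _ k a b c h₁ h₂
    refine bfT_iff.2 ⟨fun i j => ((bfT_iff.1 h₁).1 i j).trans ((bfT_iff.1 h₂).1 i j),
      fun γ hγ l d => ?_⟩
    obtain ⟨e, he⟩ := h₂.exists_append hγ d
    obtain ⟨f, hf⟩ := h₁.exists_append hγ e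
    exact ⟨f, IH γ hγ he hf⟩

theorem symm (h : bfT α L M a b) (hγ : γ < α) : bfT γ M L b a := by
  obtain ⟨c, hc⟩ := h.exists_append hγ (Fin.elim0 : Fin 0 → M)
  simpa only [Function.comp_def, Fin.append_left] using hc.comp (Fin.castAdd 0)

theorem map : ∀ {α : Ordinal} {L M L' M' : Type} [LinearOrder L] [LinearOrder M]
    [LinearOrder L'] [LinearOrder M'] {k : ℕ} {a : Fin k → L} {b : Fin k → M},
    bfT α L M a b → ∀ (f : L ≃o L') (g : M ≃o M'), bfT α L' M' (f ∘ a) (g ∘ b) := by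
  intro α
  induction α using WellFoundedLT.induction with
  | _ α IH =>
    intro L M L' M' _ _ _ _ k a b h f g
    refine bfT_iff.2 ⟨fun i j => by simpa using (bfT_iff.1 h).1 i j, fun γ hγ l d => ?_⟩
    obtain ⟨c, hc⟩ := h.exists_append hγ (g.symm ∘ d)
    refine ⟨f ∘ c, ?_⟩
    have := IH γ hγ hc g f
    rw [Fin.comp_append_s10, Fin.comp_append_s10] at this
    simpa [Function.comp_def] using this

end bfT

theorem bfT_refl : ∀ {α : Ordinal} {L : Type} [LinearOrder L] {k : ℕ} (a : Fin k → L),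
    bfT α L L a a := by
  intro α
  induction α using WellFoundedLT.induction with
  | _ α IH => exact fun a => bfT_iff.2 ⟨fun _ _ => Iff.rfl, fun γ hγ _ d => ⟨d, IH γ hγ _⟩⟩

theorem bfT_of_orderIso {a b : Fin k → L} (f : L ≃o L) (hf : ∀ i, f (a i) = b i) :
    bfT α L L a b := by
  simpa [Function.comp_def, hf] using (bfT_refl a).map (OrderIso.refl L) f

/-- Cantor's back-and-forth argument, run through the Rasiowa–Sikorski lemma on the sets of pairs
matched by `R`-related tuples. -/
theorem exists_orderIso_of_backAndForth [Countable L] [Countable M]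
    (R : ∀ k, (Fin k → L) → (Fin k → M) → Prop)
    (cmp_eq : ∀ k a b, R k a b → ∀ i j, cmp (a i) (a j) = cmp (b i) (b j))
    (forth : ∀ k a b, R k a b → ∀ x, ∃ y, R (k + 1) (Fin.snoc a x) (Fin.snoc b y))
    (back : ∀ k a b, R k a b → ∀ y, ∃ x, R (k + 1) (Fin.snoc a x) (Fin.snoc b y))
    {a : Fin k → L} {b : Fin k → M} (hab : R k a b) :
    ∃ f : L ≃o M, ∀ i, f (a i) = b i := by
  let pairs : ∀ {k}, (Fin k → L) → (Fin k → M) → Set (L × M) :=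
    fun a b => Set.range fun i => (a i, b i)
  let P := {S : Set (L × M) // ∃ k a b, R k a b ∧ S = pairs a b}
  let covers (z : L ⊕ M) (S : P) : Prop := ∃ p ∈ S.1, Sum.elim (· = p.1) (· = p.2) z
  have cofinal (z : L ⊕ M) (S : P) : ∃ T, covers z T ∧ S ≤ T := by
    obtain ⟨_, k, a, b, hR, rfl⟩ := S
    obtain ⟨x, y, hxy, hz⟩ : ∃ x y, R (k + 1) (Fin.snoc a x) (Fin.snoc b y) ∧
        Sum.elim (· = x) (· = y) z := by
      rcases z with x | y
      · obtain ⟨y, h⟩ := forth k a b hR x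
        exact ⟨x, y, h, rfl⟩
      · obtain ⟨x, h⟩ := back k a b hR y
        exact ⟨x, y, h, rfl⟩
    refine ⟨⟨pairs (Fin.snoc a x) (Fin.snoc b y), _, _, _, hxy, rfl⟩,
      ⟨(x, y), ⟨Fin.last k, by simp⟩, hz⟩, ?_⟩
    rintro _ ⟨i, rfl⟩
    exact ⟨i.castSucc, by simp⟩
  have := Encodable.ofCountable (L ⊕ M)
  let S₀ : P := ⟨pairs a b, k, a, b, hab, rfl⟩
  let D (z : L ⊕ M) : Order.Cofinal P := ⟨{S | covers z S}, cofinal z⟩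
  let I := Order.idealOfCofinals S₀ D
  have compat : ∀ S ∈ I, ∀ S' ∈ I, ∀ p ∈ S.1, ∀ p' ∈ S'.1, cmp p.1 p'.1 = cmp p.2 p'.2 := by
    intro S hS S' hS' p hp p' hp'
    obtain ⟨⟨_, k, a, b, hR, rfl⟩, -, hST, hS'T⟩ := I.directed _ hS _ hS'
    obtain ⟨i, rfl⟩ := hST hp
    obtain ⟨j, rfl⟩ := hS'T hp'
    exact cmp_eq k a b hR i j
  have hcov (z : L ⊕ M) : ∃ S ∈ I, covers z S := by
    obtain ⟨S, hz, hS⟩ := Order.cofinal_meets_idealOfCofinals S₀ D z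
    exact ⟨S, hS, hz⟩
  choose S hSI p hpS hp using hcov
  refine ⟨OrderIso.ofCmpEqCmp (fun x => (p (.inl x)).2) (fun y => (p (.inr y)).1) fun x y => ?_,
    fun i => ?_⟩
  · convert compat _ (hSI (.inl x)) _ (hSI (.inr y)) _ (hpS _) _ (hpS _) using 2
    exacts [hp (.inl x), hp (.inr y)]
  · have h := compat _ (hSI (.inl (a i))) _ (Order.mem_idealOfCofinals S₀ D) _ (hpS _)
      (a i, b i) ⟨i, rfl⟩
    rw [← show a i = (p (.inl (a i))).1 from hp (.inl (a i)), cmp_self_eq_eq, eq_comm,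
      cmp_eq_eq_iff] at h
    exact h

theorem exists_bfT_stable (L M : Type) [LinearOrder L] [LinearOrder M] :
    ∃ α : Ordinal.{u}, ∀ k (a : Fin k → L) (b : Fin k → M), bfT α L M a b →
      ∀ β : Ordinal.{u}, bfT β L M a b := by
  let failure (p : Σ k, (Fin k → L) × (Fin k → M)) : Ordinal.{u} :=
    sInf {β | ¬ bfT β L M p.2.1 p.2.2}
  refine ⟨⨆ p, failure p, fun k a b h β => by_contra fun hβ => ?_⟩
  have hfail : ¬ bfT (failure ⟨k, a, b⟩) L M a b := csInf_mem (s := {β | ¬ bfT β L M a b}) ⟨β, hβ⟩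
  exact hfail (h.mono (le_ciSup (f := failure) Ordinal.bddAbove_of_small ⟨k, a, b⟩))

theorem exists_orderIso_of_forall_bfT [Countable L] [Countable M] {a : Fin k → L}
    {b : Fin k → M} (h : ∀ β : Ordinal.{u}, bfT β L M a b) : ∃ f : L ≃o M, ∀ i, f (a i) = b i := by
  obtain ⟨α, hα⟩ := exists_bfT_stable L M
  have h₁₂ : α + 1 < α + 2 := by gcongr; norm_num
  refine exists_orderIso_of_backAndForth (fun k a b => ∀ β, bfT β L M a b)
    (fun k a b h => (h 0).cmp_eq) (fun k a b h x => ?_) (fun k a b h y => ?_) h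
  · obtain ⟨y, hy⟩ := ((h (α + 2)).symm h₁₂).exists_snoc (lt_add_one α) x
    exact ⟨y, hα _ _ _ hy⟩
  · obtain ⟨x, hx⟩ := (h (α + 2)).exists_snoc h₁₂ y
    exact ⟨x, hα _ _ _ (hx.symm (lt_add_one α))⟩

theorem exists_orderIso_of_bfT_rk [Countable L] {a b : Fin k → L} (h : bfT (rk L a) L L a b) :
    ∃ f : L ≃o L, ∀ i, f (a i) = b i := by
  obtain ⟨α, hα⟩ := exists_bfT_stable L L
  exact csInf_mem (s := {α | ∀ b : Fin k → L, bfT α L L a b → ∃ f : L ≃o L, ∀ i, f (a i) = b i})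
    ⟨α, fun b h => exists_orderIso_of_forall_bfT (hα _ _ _ h)⟩ b h

theorem rk_le {a : Fin k → L}
    (h : ∀ b : Fin k → L, bfT α L L a b → ∃ f : L ≃o L, ∀ i, f (a i) = b i) : rk L a ≤ α :=
  csInf_le' h

theorem rk_lt_scottRank (a : Fin k → L) : rk L a < scottRank L := by
  refine csInf_mem (s := {α | ∀ k (a : Fin k → L), rk L a < α})
    ⟨(⨆ p : Σ k, Fin k → L, rk L p.2) + 1, fun k a => ?_⟩ k a
  exact Order.lt_add_one_iff.2 (le_ciSup Ordinal.bddAbove_of_small (⟨k, a⟩ : Σ k, Fin k → L))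

theorem scottRank_le (h : ∀ k (a : Fin k → L), rk L a < α) : scottRank L ≤ α :=
  csInf_le' h

theorem scottRank_pos : 0 < scottRank L :=
  zero_le.trans_lt (rk_lt_scottRank (Fin.elim0 : Fin 0 → L))

theorem scottRank_le_one [Subsingleton L] : scottRank L ≤ 1 :=
  scottRank_le fun _ _ => Order.lt_one_iff.2 <| le_antisymm
    (rk_le fun _ _ => ⟨OrderIso.refl L, fun _ => Subsingleton.elim _ _⟩) zero_le

theorem exists_orderIso_of_bfT_orderIso_comp (φ : L ≃o M) {a : Fin k → L}
    (ha : ∀ b, bfT α L L a b → ∃ f : L ≃o L, ∀ i, f (a i) = b i) {b : Fin k → M}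
    (hb : bfT α M M (φ ∘ a) b) : ∃ g : M ≃o M, ∀ i, g (φ (a i)) = b i := by
  obtain ⟨f, hf⟩ := ha _ (by simpa [Function.comp_def] using hb.map φ.symm φ.symm)
  exact ⟨(φ.symm.trans f).trans φ, fun i => by simp [hf]⟩

theorem rk_orderIso_comp (φ : L ≃o M) (a : Fin k → L) : rk M (φ ∘ a) = rk L a := by
  refine congrArg sInf (Set.ext fun α => ⟨fun h b hb => ?_, fun h b hb => ?_⟩)
  · have h' : ∀ b, bfT α M M (φ ∘ a) b → ∃ g : M ≃o M, ∀ i, g (φ (a i)) = b i := h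
    simpa using exists_orderIso_of_bfT_orderIso_comp φ.symm h'
      (b := b) (by simpa [Function.comp_def] using hb)
  · exact exists_orderIso_of_bfT_orderIso_comp φ h hb

theorem scottRank_congr (φ : L ≃o M) : scottRank L = scottRank M := by
  refine congrArg sInf (Set.ext fun α => ⟨fun h k b => ?_, fun h k a => ?_⟩)
  · simpa [← Function.comp_assoc] using rk_orderIso_comp φ.symm b ▸ h k (φ.symm ∘ b)
  · exact rk_orderIso_comp φ a ▸ h k (φ ∘ a)

/-- This is the content of the `Π_{SR+1}` Scott sentence of a countable linear order `L`. -/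
theorem exists_orderIso_of_bfT_scottRank_add_one [Countable L] [Countable M] {a : Fin k → L}
    {b : Fin k → M} (h : bfT (scottRank L + 1) L M a b) : ∃ f : L ≃o M, ∀ i, f (a i) = b i := by
  have partner {n} (v : Fin n → M) : ∃ w : Fin n → L, bfT (scottRank L) M L v w := by
    obtain ⟨w, hw⟩ := h.exists_append (lt_add_one _) v
    exact ⟨w, by simpa [Function.comp_def] using hw.comp (Fin.natAdd k)⟩
  refine exists_orderIso_of_backAndForth (fun _ u v => bfT (rk L u) L M u v)
    (fun _ _ _ h => h.cmp_eq) (fun n u v huv x => ?_) (fun n u v huv y => ?_)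
    (h.mono ((rk_lt_scottRank a).trans (lt_add_one _)).le)
  · obtain ⟨w, hw⟩ := partner v
    obtain ⟨g, hg⟩ := exists_orderIso_of_bfT_rk (huv.trans (hw.mono (rk_lt_scottRank u).le))
    obtain ⟨y, hy⟩ := hw.exists_snoc (rk_lt_scottRank (Fin.snoc u x)) (g x)
    refine ⟨y, (bfT_of_orderIso g fun i => ?_).trans hy⟩
    exact Fin.lastCases (by simp) (fun i => by simp [hg]) i
  · obtain ⟨w, hw⟩ := partner (Fin.snoc v y)
    have hw' : bfT (rk L u) L L u (w ∘ Fin.castSucc) :=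
      huv.trans (by simpa using (hw.comp Fin.castSucc).mono (rk_lt_scottRank u).le)
    obtain ⟨g, hg⟩ := exists_orderIso_of_bfT_rk hw'
    refine ⟨g.symm (w (Fin.last n)), (hw.trans (bfT_of_orderIso g.symm fun i => ?_)).symm
      (rk_lt_scottRank _)⟩
    exact Fin.lastCases (by simp) (fun i => by simp [OrderIso.symm_apply_eq, hg]) i

/-- Indexing the pieces of `L = L_{<c} + {c} + L_{>c}` by `Ordering` lets both cones be handled
by the same lemmas. -/
abbrev Side (c : L) (o : Ordering) : Type := {x : L // cmp x c = o}

theorem exists_orderIso_of_sides {c : L} {d : M} (F : ∀ o, Side c o ≃o Side d o) :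
    ∃ G : L ≃o M, ∀ o (x : Side c o), G x = F o x := by
  let G : L ≃ M := Equiv.ofFiberEquiv fun o => (F o).toEquiv
  have hG : ∀ o (x : Side c o), G x = F o x := by
    rintro o ⟨x, rfl⟩
    rfl
  refine ⟨⟨G, fun {x y} => le_iff_le_of_cmp_eq_cmp ?_⟩, hG⟩
  by_cases h : cmp x c = cmp y c
  · rw [hG _ ⟨x, rfl⟩, hG _ ⟨y, h.symm⟩]
    exact (F _).strictMono.cmp_map_eq _ _
  · have side := Equiv.ofFiberEquiv_map fun o => (F o).toEquiv
    exact (cmp_eq_cmp_of_cmp_ne (side x).symm (side y).symm h).symm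

theorem exists_orderIso_side_of_map_eq (G : L ≃o M) {c : L} {d : M} (h : G c = d) (o : Ordering) :
    ∃ F : Side c o ≃o Side d o, ∀ x, (F x : M) = G x :=
  ⟨⟨G.toEquiv.subtypeEquiv fun x => by
    rw [← h]
    change _ ↔ cmp (G x) (G c) = o
    rw [G.strictMono.cmp_map_eq], G.le_iff_le⟩,
    fun _ => rfl⟩

theorem bfT.restrict_side : ∀ {γ : Ordinal} {L M : Type} [LinearOrder L] [LinearOrder M]
    {n m : ℕ} {p : Fin n → L} {q : Fin n → M} {i₀ : Fin n} {c : L} {d : M} {o : Ordering}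
    {u : Fin m → Side c o} {v : Fin m → Side d o},
    bfT γ L M p q → p i₀ = c → q i₀ = d → (∀ i, ∃ j, (u i : L) = p j ∧ (v i : M) = q j) →
    bfT γ (Side c o) (Side d o) u v := by
  intro γ
  induction γ using WellFoundedLT.induction with
  | _ γ IH =>
    intro L M _ _ n m p q i₀ c d o u v h hp hq huv
    refine bfT_iff.2 ⟨fun i j => ?_, fun δ hδ l D => ?_⟩
    · obtain ⟨i', hu, hv⟩ := huv i
      obtain ⟨j', hu', hv'⟩ := huv j
      rw [← Subtype.coe_le_coe, ← Subtype.coe_le_coe, hu, hv, hu', hv']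
      exact (bfT_iff.1 h).1 i' j'
    obtain ⟨r, hr⟩ := h.exists_append hδ (Subtype.val ∘ D)
    have hr_side (j : Fin l) : cmp (r j) c = o := by
      have := hr.cmp_eq (Fin.natAdd n j) (Fin.castAdd l i₀)
      simp only [Fin.append_right, Fin.append_left, hp, hq, Function.comp_apply] at this
      exact this ▸ (D j).2
    refine ⟨fun j => ⟨r j, hr_side j⟩, IH δ hδ hr (i₀ := Fin.castAdd l i₀) (by simp [hq])
      (by simp [hp]) fun i => ?_⟩
    refine Fin.addCases (fun i => ?_) (fun i => ?_) i
    · obtain ⟨j, hu, hv⟩ := huv i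
      exact ⟨Fin.castAdd l j, by simp [hu, hv]⟩
    · exact ⟨Fin.natAdd n i, by simp⟩

theorem bfT_of_side : ∀ {γ : Ordinal} {L : Type} [LinearOrder L] {c : L} {o : Ordering}
    {m n : ℕ} {u v : Fin m → Side c o} {p q : Fin n → L}, bfT γ (Side c o) (Side c o) u v →
    (∀ i, (cmp (p i) c ≠ o ∧ p i = q i) ∨ ∃ j, p i = u j ∧ q i = v j) → bfT γ L L p q := by
  intro γ
  induction γ using WellFoundedLT.induction with
  | _ γ IH =>
    intro L _ c o m n u v p q h hpq
    refine bfT_iff.2 ⟨fun i j => le_iff_le_of_cmp_eq_cmp ?_, fun δ hδ l D => ?_⟩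
    · rcases hpq i with ⟨hi, ei⟩ | ⟨i', ui, vi⟩ <;> rcases hpq j with ⟨hj, ej⟩ | ⟨j', uj, vj⟩
      · rw [ei, ej]
      · refine cmp_eq_cmp_of_cmp_ne (by rw [ei]) (by rw [uj, vj, (u j').2, (v j').2]) ?_
        rwa [uj, (u j').2]
      · refine cmp_eq_cmp_of_cmp_ne (by rw [ui, vi, (u i').2, (v i').2]) (by rw [ej]) ?_
        rw [ui, (u i').2]
        exact hj.symm
      · rw [ui, vi, uj, vj]
        exact h.cmp_eq i' j'
    let e := Fintype.equivFin {i : Fin l // cmp (D i) c = o}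
    obtain ⟨r, hr⟩ := h.exists_append hδ fun j => ⟨D (e.symm j), (e.symm j).2⟩
    let C (i : Fin l) : L := if hi : cmp (D i) c = o then r (e ⟨i, hi⟩) else D i
    refine ⟨C, IH δ hδ hr fun i => ?_⟩
    refine Fin.addCases (fun i => ?_) (fun i => ?_) i
    · rcases hpq i with ⟨hi, ei⟩ | ⟨j, uj, vj⟩
      · exact .inl ⟨by simpa [← ei] using hi, by simp [ei]⟩
      · exact .inr ⟨Fin.castAdd _ j, by simp [uj, vj]⟩
    · by_cases hi : cmp (D i) c = o
      · exact .inr ⟨Fin.natAdd _ (e ⟨i, hi⟩), by simp [C, hi]⟩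
      · exact .inl ⟨by simpa using hi, by simp [C, hi]⟩

theorem exists_orderIso_side_of_bfT [Countable L] [Countable M] {n : ℕ} {p : Fin n → L}
    {q : Fin n → M} {i₀ : Fin n} {c : L} {d : M} {o : Ordering}
    (h : bfT (scottRank (Side c o) + 1) L M p q) (hp : p i₀ = c) (hq : q i₀ = d) :
    ∃ F : Side c o ≃o Side d o, ∀ j (hj : cmp (p j) c = o), (F ⟨p j, hj⟩ : M) = q j := by
  let e := Fintype.equivFin {j // cmp (p j) c = o}
  have hq_side (j) : cmp (q j) d = cmp (p j) c := by simpa [hp, hq] using (h.cmp_eq j i₀).symm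
  obtain ⟨F, hF⟩ := exists_orderIso_of_bfT_scottRank_add_one <| h.restrict_side hp hq
    (u := fun i => ⟨p (e.symm i), (e.symm i).2⟩)
    (v := fun i => ⟨q (e.symm i), (hq_side _).trans (e.symm i).2⟩) fun i => ⟨_, rfl, rfl⟩
  refine ⟨F, fun j hj => ?_⟩
  simpa using congrArg Subtype.val (hF (e ⟨j, hj⟩))

instance (c : L) : Subsingleton (Side c .eq) :=
  ⟨fun x y => Subtype.ext (((cmp_eq_eq_iff _ _).1 x.2).trans ((cmp_eq_eq_iff _ _).1 y.2).symm)⟩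

theorem scottRank_side_le [Countable L] {c : L} {o : Ordering} (ho : o ≠ .eq) :
    scottRank (Side c o) ≤ scottRank L := by
  refine scottRank_le fun k a => (rk_le fun b hb => ?_).trans_lt
    (rk_lt_scottRank (Fin.snoc (Subtype.val ∘ a) c))
  set p : Fin (k + 1) → L := Fin.snoc (Subtype.val ∘ a) c
  set q : Fin (k + 1) → L := Fin.snoc (Subtype.val ∘ b) c
  have hpq (i : Fin (k + 1)) : (cmp (p i) c ≠ o ∧ p i = q i) ∨ ∃ j, p i = a j ∧ q i = b j := by
    refine Fin.lastCases ?_ (fun i => .inr ⟨i, by simp [p, q]⟩) i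
    exact .inl ⟨by simpa [p] using ho.symm, by simp [p, q]⟩
  obtain ⟨G, hG⟩ := exists_orderIso_of_bfT_rk (bfT_of_side hb hpq)
  obtain ⟨F, hF⟩ := exists_orderIso_side_of_map_eq G (by simpa [p, q] using hG (Fin.last k)) o
  exact ⟨F, fun i => Subtype.ext ((hF _).trans (by simpa [p, q] using hG i.castSucc))⟩

theorem scottRank_le_add_three [Countable L] (c : L) {μ : Ordinal}
    (hμ : ∀ o, scottRank (Side c o) ≤ μ) : scottRank L ≤ μ + 3 := by
  refine scottRank_le fun k t => (rk_le fun s hs => ?_).trans_lt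
    (show μ + 2 < μ + 3 by gcongr; norm_num)
  obtain ⟨d, hd⟩ := hs.exists_snoc (show μ + 1 < μ + 2 by gcongr; norm_num) c
  set p : Fin (k + 1) → L := Fin.snoc s c
  set q : Fin (k + 1) → L := Fin.snoc t d
  have (o : Ordering) : ∃ F : Side c o ≃o Side d o, ∀ j (hj : cmp (p j) c = o),
      (F ⟨p j, hj⟩ : L) = q j :=
    exists_orderIso_side_of_bfT (hd.mono (by gcongr; exact hμ o)) (Fin.snoc_last ..)
      (Fin.snoc_last ..)
  choose F hF using this
  obtain ⟨G, hG⟩ := exists_orderIso_of_sides F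
  refine ⟨G.symm, fun i => G.symm_apply_eq.2 ?_⟩
  rw [hG _ ⟨s i, rfl⟩]
  simpa [p, q] using (hF _ i.castSucc (by simp [p] : cmp (p i.castSucc) c = cmp (s i) c)).symm

section SumLex

instance {α : Type} [Countable α] : Countable (Lex α) := ‹Countable α›

variable (A B : Type) [LinearOrder A] [LinearOrder B]

def sumLexMid : A ⊕ₗ Unit ⊕ₗ B := toLex (.inr (toLex (.inl ())))

theorem scottRank_side_sumLexMid_lt : scottRank (Side (sumLexMid A B) .lt) = scottRank A := by
  refine (scottRank_congr (StrictMono.orderIsoOfSurjective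
    (fun a => ⟨toLex (.inl a), by simp [sumLexMid]⟩) (fun _ _ h => Sum.Lex.inl_lt_inl_iff.2 h)
    ?_)).symm
  rintro ⟨x, hx⟩
  obtain ⟨a | y, rfl⟩ := toLex.surjective x
  · exact ⟨a, rfl⟩
  obtain ⟨u | b, rfl⟩ := toLex.surjective y <;> simp [sumLexMid] at hx

theorem scottRank_side_sumLexMid_gt : scottRank (Side (sumLexMid A B) .gt) = scottRank B := by
  refine (scottRank_congr (StrictMono.orderIsoOfSurjective
    (fun b => ⟨toLex (.inr (toLex (.inr b))), by simp [sumLexMid]⟩)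
    (fun _ _ h => Sum.Lex.inr_lt_inr_iff.2 (Sum.Lex.inr_lt_inr_iff.2 h)) ?_)).symm
  rintro ⟨x, hx⟩
  obtain ⟨a | y, rfl⟩ := toLex.surjective x
  · simp [sumLexMid] at hx
  obtain ⟨u | b, rfl⟩ := toLex.surjective y
  · simp [sumLexMid] at hx
  · exact ⟨b, rfl⟩

end SumLex

end

/-- For countable linear orders `A`, `B`:
`max (SR A) (SR B) ≤ SR (A + 1 + B) ≤ max (SR A) (SR B) + 3`. -/
theorem scottRank_sum_one (A B : Type) [LinearOrder A] [LinearOrder B]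
    [Countable A] [Countable B] :
    max (scottRank A) (scottRank B) ≤ scottRank (A ⊕ₗ Unit ⊕ₗ B) ∧
    scottRank (A ⊕ₗ Unit ⊕ₗ B) ≤ max (scottRank A) (scottRank B) + 3 := by
  simp only [← scottRank_side_sumLexMid_lt A B, ← scottRank_side_sumLexMid_gt A B]
  refine ⟨max_le (scottRank_side_le (by decide)) (scottRank_side_le (by decide)),
    scottRank_le_add_three (sumLexMid A B) fun o => ?_⟩
  cases o
  · exact le_max_left _ _
  · exact scottRank_le_one.trans (Order.one_le_iff_pos.2 (scottRank_pos.trans_le (le_max_left _ _)))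
  · exact le_max_right _ _
end
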